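/- arXiv:1803.09227 — 6 statements merged into one kernel-verified Lean document; each statement's English description precedes it below -/
import Mathlib

section
/- (Additive drift, upper tail bound.) For all constants a, b, δ, ξ, η > 0 with a < b, and every function r = r(n) with r(n) = o(n/log n), there exist ρ > 0 and n₀ ∈ ℕ such that the following holds for all n ≥ n₀. Let (X^(t))_{t∈ℕ₀} be a Markov chain on a finite state space S ⊆ ℝ such that for all t ≥ 0: (1) E[X^(t) − X^(t+1) | X^(t) = s] ≥ δ for all s ∈ S with s > a·n, and (2) Pr[|X^(t) − X^(t+1)| ≥ j | X^(t) = s] ≤ r·(1+ξ)^{−j} for all j ∈ ℕ₀ and all s ∈ S. Let T_a := min{t ≥ 0 : X^(t) ≤ a·n}. Then Pr[T_a ≥ (1+η)(b−a)n/δ | X^(0) ≤ b·n] ≤ e^{−ρ·n/r}. -/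
/-!
Take `λ = θ / r(n)` for a small constant `θ`. Expanding `exp` to second order, the drift `δ`
and the geometric tail of the steps give `E[exp (λ X⁽ᵗ⁺¹⁾) | X⁽ᵗ⁾ = s] ≤ exp (-λκ) exp (λ s)` for
every state `s > a n`, with `κ` slightly below `δ`. By the Markov property this bound also holds
conditionally on every history, so `E[exp (λ X⁽ᵗ⁾); X⁽⁰⁾ ≤ b n, X⁽⁰⁾, …, X⁽ᵗ⁾ > a n]` shrinks by
the factor `exp (-λκ)` per step. Markov's inequality at time `N ≈ (1 + η)(b - a) n / δ` bounds the
probability that the chain is still above `a n` by `exp (λ (b - a) n - λ κ N) ≤ exp (-ρ n / r(n))`.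
-/

open MeasureTheory ProbabilityTheory Filter Real
open scoped ENNReal

lemma exp_le_one_add_add_sq_mul_exp_abs (x : ℝ) : exp x ≤ 1 + x + x ^ 2 * exp |x| := by
  have key : (1 - x) * exp x ≤ 1 := by
    have h₁ := add_one_le_exp (-x)
    have h₂ : exp (-x) * exp x = 1 := by rw [← exp_add]; simp
    nlinarith [exp_pos x]
  rcases le_or_gt x 0 with hx | hx
  · rw [abs_of_nonpos hx]
    have h₁ : 1 - exp x ≤ -x := by linarith [add_one_le_exp x]
    have h₂ : 1 ≤ exp (-x) := one_le_exp (by linarith)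
    nlinarith [mul_le_mul_of_nonneg_left h₁ (neg_nonneg.2 hx),
      mul_le_mul_of_nonneg_left h₂ (sq_nonneg x)]
  · rw [abs_of_pos hx]
    nlinarith [mul_le_mul_of_nonneg_left key hx.le]

lemma sq_le_mul_exp_half_mul_abs {m : ℝ} (hm : 0 < m) (x : ℝ) :
    x ^ 2 ≤ 8 / m ^ 2 * exp (m / 2 * |x|) := by
  have h := pow_div_factorial_le_exp (m / 2 * |x|) (by positivity) 2
  rw [mul_pow, sq_abs, Nat.factorial_two] at h
  rw [div_mul_eq_mul_div, le_div_iff₀ (by positivity)]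
  nlinarith

lemma sum_indicator_fiber {Ω α : Type*} {Y : Ω → α} {S : Finset α} (hS : ∀ ω, Y ω ∈ S)
    (φ : Ω → ℝ) (ω : Ω) :
    ∑ s ∈ S, {ω | Y ω = s}.indicator φ ω = φ ω := by
  rw [Finset.sum_eq_single_of_mem (Y ω) (hS ω) fun s _ hs =>
    Set.indicator_of_notMem (show ω ∉ {ω | Y ω = s} from Ne.symm hs) φ]
  exact Set.indicator_of_mem (show ω ∈ {ω' | Y ω' = Y ω} from rfl) φ

section FiniteRange

variable {Ω α : Type*} [MeasurableSpace Ω] [MeasurableSpace α] [MeasurableSingletonClass α]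
  {μ : Measure Ω}

lemma measurableSet_fiber {Y : Ω → α} (hY : Measurable Y) (s : α) :
    MeasurableSet {ω | Y ω = s} :=
  hY (measurableSet_singleton s)

lemma integrable_comp_of_forall_mem [IsFiniteMeasure μ] {Y : Ω → α} (hY : Measurable Y)
    {S : Finset α} (hS : ∀ ω, Y ω ∈ S) (f : α → ℝ) : Integrable (fun ω => f (Y ω)) μ := by
  have h : (fun ω => f (Y ω)) = fun ω => ∑ s ∈ S, {ω | Y ω = s}.indicator (fun _ => f s) ω := by
    funext ω
    rw [← sum_indicator_fiber hS (fun ω => f (Y ω)) ω]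
    refine Finset.sum_congr rfl fun s _ => congr_fun (Set.indicator_congr
      (f := fun ω => f (Y ω)) (g := fun _ => f s) fun ω' (hω' : Y ω' = s) => ?_) ω
    simp only [hω']
  rw [h]
  exact integrable_finsetSum _ fun s _ =>
    (integrable_const (f s)).indicator (measurableSet_fiber hY s)

lemma setIntegral_eq_sum_fiber {Y : Ω → α} (hY : Measurable Y) {S : Finset α}
    (hS : ∀ ω, Y ω ∈ S) {φ : Ω → ℝ} (hφ : Integrable φ μ) (G : Set Ω) :
    ∫ ω in G, φ ω ∂μ = ∑ s ∈ S, ∫ ω in G ∩ {ω | Y ω = s}, φ ω ∂μ := by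
  rw [← Finset.sum_congr rfl fun s _ => setIntegral_indicator (measurableSet_fiber hY s),
    ← integral_finsetSum _ fun s _ =>
      (hφ.indicator (measurableSet_fiber hY s)).integrableOn]
  simp_rw [sum_indicator_fiber hS]

lemma integral_comp_eq_sum [IsFiniteMeasure μ] {Y : Ω → α} (hY : Measurable Y) {S : Finset α}
    (hS : ∀ ω, Y ω ∈ S) (f : α → ℝ) :
    ∫ ω, f (Y ω) ∂μ = ∑ s ∈ S, μ.real {ω | Y ω = s} * f s := by
  rw [← setIntegral_univ, setIntegral_eq_sum_fiber hY hS (integrable_comp_of_forall_mem hY hS f)]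
  refine Finset.sum_congr rfl fun s _ => ?_
  rw [Set.univ_inter, setIntegral_congr_fun (measurableSet_fiber hY s)
    fun ω (hω : Y ω = s) => by rw [hω], setIntegral_const, smul_eq_mul]

lemma measure_eq_sum_fiber_inter {F : Ω → α} (hF : Measurable F) {K : Finset α}
    (hK : ∀ ω, F ω ∈ K) (A : Set Ω) : μ A = ∑ k ∈ K, μ ({ω | F ω = k} ∩ A) := by
  have h := sum_measure_preimage_singleton (μ := μ.restrict A) K fun k _ => measurableSet_fiber hF k
  rw [show F ⁻¹' ↑K = Set.univ from Set.eq_univ_of_forall hK, Measure.restrict_apply_univ] at h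
  rw [← h]
  exact Finset.sum_congr rfl fun k _ => Measure.restrict_apply (measurableSet_fiber hF k)

end FiniteRange

lemma setIntegral_eq_measureReal_mul_integral_cond {Ω : Type*} [MeasurableSpace Ω]
    {μ : Measure Ω} [IsFiniteMeasure μ] (A : Set Ω) (φ : Ω → ℝ) :
    ∫ ω in A, φ ω ∂μ = μ.real A * ∫ ω, φ ω ∂μ[|A] := by
  rcases eq_or_ne (μ A) 0 with h0 | h0
  · rw [setIntegral_measure_zero _ h0, measureReal_def, h0, ENNReal.toReal_zero, zero_mul]
  rw [ProbabilityTheory.cond, integral_smul_measure, smul_eq_mul, ← mul_assoc, ENNReal.toReal_inv,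
    measureReal_def, mul_inv_cancel₀ (ENNReal.toReal_ne_zero.2 ⟨h0, measure_ne_top _ _⟩), one_mul]

section MomentGeneratingFunction

variable {Ω : Type*} [MeasurableSpace Ω] {P : Measure Ω}

lemma integral_exp_mul_abs_le [IsFiniteMeasure P] {D : Ω → ℝ} (hD : Measurable D) {T : Finset ℝ}
    (hT : ∀ ω, D ω ∈ T) {R q m : ℝ} (hR : 0 ≤ R) (hq : 0 ≤ q) (hm : 0 ≤ m) (hqm : q * exp m < 1)
    (htail : ∀ j : ℕ, P {ω | (j : ℝ) ≤ |D ω|} ≤ ENNReal.ofReal (R * q ^ j)) :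
    ∫ ω, exp (m * |D ω|) ∂P ≤ R * exp m / (1 - q * exp m) := by
  set J := ⌈∑ x ∈ T, |x|⌉₊
  have hmeas : ∀ j : ℕ, MeasurableSet {ω | (j : ℝ) ≤ |D ω|} :=
    fun j => measurableSet_le measurable_const hD.abs
  have hint : ∀ j : ℕ, Integrable ({ω | (j : ℝ) ≤ |D ω|}.indicator fun _ => exp (m * (j + 1))) P :=
    fun j => (integrable_const _).indicator (hmeas j)
  -- `exp (m * |x|) ≤ exp (m * (⌊|x|⌋ + 1))`, the term of index `⌊|x|⌋`
  have hlayer : ∀ ω, exp (m * |D ω|) ≤ ∑ j ∈ Finset.range (J + 1),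
      {ω | (j : ℝ) ≤ |D ω|}.indicator (fun _ => exp (m * (j + 1))) ω := by
    intro ω
    set k := ⌊|D ω|⌋₊
    have hkJ : k ∈ Finset.range (J + 1) := by
      refine Finset.mem_range_succ_iff.2 (Nat.floor_le_of_le ?_)
      exact (Finset.single_le_sum (fun x _ => abs_nonneg x) (hT ω)).trans (Nat.le_ceil _)
    refine le_trans ?_ (Finset.single_le_sum (fun j _ => Set.indicator_nonneg
      (fun _ _ => (exp_pos _).le) ω) hkJ)
    have hk : (k : ℝ) ≤ |D ω| := Nat.floor_le (abs_nonneg _)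
    rw [Set.indicator_of_mem (show ω ∈ {ω | (k : ℝ) ≤ |D ω|} from hk)]
    exact exp_le_exp.2 (mul_le_mul_of_nonneg_left (Nat.lt_floor_add_one _).le hm)
  calc ∫ ω, exp (m * |D ω|) ∂P
      ≤ ∫ ω, ∑ j ∈ Finset.range (J + 1),
          {ω | (j : ℝ) ≤ |D ω|}.indicator (fun _ => exp (m * (j + 1))) ω ∂P :=
        integral_mono (integrable_comp_of_forall_mem hD hT fun x => exp (m * |x|))
          (integrable_finsetSum _ fun j _ => hint j) hlayer
    _ = ∑ j ∈ Finset.range (J + 1), P.real {ω | (j : ℝ) ≤ |D ω|} * exp (m * (j + 1)) := by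
        rw [integral_finsetSum _ fun j _ => hint j]
        simp_rw [integral_indicator_const _ (hmeas _), smul_eq_mul]
    _ ≤ ∑ j ∈ Finset.range (J + 1), R * exp m * (q * exp m) ^ j := by
        refine Finset.sum_le_sum fun j _ => ?_
        rw [mul_pow, ← exp_nat_mul, show m * (j + 1) = j * m + m by ring, exp_add]
        calc P.real {ω | (j : ℝ) ≤ |D ω|} * (exp (j * m) * exp m)
            ≤ R * q ^ j * (exp (j * m) * exp m) := by
              gcongr
              exact ENNReal.toReal_le_of_le_ofReal (by positivity) (htail j)
          _ = _ := by ring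
    _ ≤ R * exp m / (1 - q * exp m) := by
        rw [← Finset.mul_sum, div_eq_mul_inv]
        gcongr
        simpa using geom_sum_Ico_le_of_lt_one (m := 0) (n := J + 1) (by positivity) hqm

lemma exists_pos_mul_exp_lt_one {q : ℝ} (hq : 0 < q) (hq1 : q < 1) :
    ∃ m, 0 < m ∧ q * exp m < 1 := by
  have hlog : log q < 0 := log_neg hq hq1
  refine ⟨-log q / 2, by linarith, ?_⟩
  calc q * exp (-log q / 2) < q * exp (-log q) := by gcongr; linarith
    _ = 1 := by rw [exp_neg, exp_log hq, mul_inv_cancel₀ hq.ne']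

/-- From `x ^ 2 ≤ 8 / m ^ 2 * exp (m / 2 * |x|)` and the geometric series `∑ (q * exp m) ^ j`
that bounds `E[exp (m * |D|)]` under the tail bound `P (j ≤ |D|) ≤ R * q ^ j`. -/
noncomputable def mgfConst (q m : ℝ) : ℝ := 8 / m ^ 2 * (exp m / (1 - q * exp m))

lemma mgfConst_pos {q m : ℝ} (hm : 0 < m) (hqm : q * exp m < 1) : 0 < mgfConst q m := by
  have := sub_pos.2 hqm
  unfold mgfConst
  positivity

lemma one_le_of_forall_measure_le_ofReal [IsProbabilityMeasure P] {D : Ω → ℝ} {R q : ℝ}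
    (htail : ∀ j : ℕ, P {ω | (j : ℝ) ≤ |D ω|} ≤ ENNReal.ofReal (R * q ^ j)) : 1 ≤ R := by
  simpa using htail 0

lemma integral_exp_neg_mul_le [IsProbabilityMeasure P] {D : Ω → ℝ} (hD : Measurable D)
    {T : Finset ℝ} (hT : ∀ ω, D ω ∈ T) {δ κ R q m lam : ℝ} (hq : 0 ≤ q) (hm : 0 < m)
    (hqm : q * exp m < 1) (hlam : 0 ≤ lam) (hlamR : lam * R ≤ m / 2)
    (hκ : lam * R * mgfConst q m ≤ δ - κ) (hdrift : δ ≤ ∫ ω, D ω ∂P)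
    (htail : ∀ j : ℕ, P {ω | (j : ℝ) ≤ |D ω|} ≤ ENNReal.ofReal (R * q ^ j)) :
    ∫ ω, exp (-(lam * D ω)) ∂P ≤ exp (-(lam * κ)) := by
  have hR : 1 ≤ R := one_le_of_forall_measure_le_ofReal htail
  have hlam' : lam ≤ m / 2 := by nlinarith
  have hint (f : ℝ → ℝ) : Integrable (fun ω => f (D ω)) P := integrable_comp_of_forall_mem hD hT f
  have hsq : ∫ ω, D ω ^ 2 * exp (lam * |D ω|) ∂P ≤ R * mgfConst q m := by
    have hpt (x : ℝ) : x ^ 2 * exp (lam * |x|) ≤ 8 / m ^ 2 * exp (m * |x|) :=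
      calc x ^ 2 * exp (lam * |x|) ≤ 8 / m ^ 2 * exp (m / 2 * |x|) * exp (lam * |x|) := by
            gcongr; exact sq_le_mul_exp_half_mul_abs hm x
        _ = 8 / m ^ 2 * exp ((m / 2 + lam) * |x|) := by rw [mul_assoc, ← exp_add]; ring_nf
        _ ≤ 8 / m ^ 2 * exp (m * |x|) := by gcongr; linarith
    calc ∫ ω, D ω ^ 2 * exp (lam * |D ω|) ∂P
        ≤ ∫ ω, 8 / m ^ 2 * exp (m * |D ω|) ∂P :=
          integral_mono (hint fun x => x ^ 2 * exp (lam * |x|))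
            (hint fun x => 8 / m ^ 2 * exp (m * |x|)) fun ω => hpt _
      _ = 8 / m ^ 2 * ∫ ω, exp (m * |D ω|) ∂P := integral_const_mul _ _
      _ ≤ 8 / m ^ 2 * (R * exp m / (1 - q * exp m)) := by
          gcongr
          exact integral_exp_mul_abs_le hD hT (by linarith) hq hm.le hqm htail
      _ = R * mgfConst q m := by unfold mgfConst; ring
  have hpt (x : ℝ) : exp (-(lam * x)) ≤ 1 - lam * x + lam ^ 2 * (x ^ 2 * exp (lam * |x|)) := by
    have h := exp_le_one_add_add_sq_mul_exp_abs (-(lam * x))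
    rw [abs_neg, abs_mul, abs_of_nonneg hlam] at h
    linarith
  calc ∫ ω, exp (-(lam * D ω)) ∂P
      ≤ ∫ ω, (1 - lam * D ω + lam ^ 2 * (D ω ^ 2 * exp (lam * |D ω|))) ∂P :=
        integral_mono (hint fun x => exp (-(lam * x)))
          (hint fun x => 1 - lam * x + lam ^ 2 * (x ^ 2 * exp (lam * |x|))) fun ω => hpt _
    _ = 1 - lam * ∫ ω, D ω ∂P + lam ^ 2 * ∫ ω, D ω ^ 2 * exp (lam * |D ω|) ∂P := by
        rw [integral_add (hint fun x => 1 - lam * x)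
            (hint fun x => lam ^ 2 * (x ^ 2 * exp (lam * |x|))),
          integral_sub (integrable_const 1) (hint fun x => lam * x),
          integral_const_mul, integral_const_mul]
        simp
    _ ≤ 1 - lam * δ + lam ^ 2 * (R * mgfConst q m) := by gcongr
    _ ≤ 1 - lam * κ := by nlinarith [mul_le_mul_of_nonneg_left hκ hlam]
    _ ≤ exp (-(lam * κ)) := by linarith [add_one_le_exp (-(lam * κ))]

open scoped Pointwise in
lemma integral_exp_mul_le_of_drift [IsFiniteMeasure P] {Y Z : Ω → ℝ} (hY : Measurable Y)
    (hZ : Measurable Z) {S : Finset ℝ} (hYS : ∀ ω, Y ω ∈ S) (hZS : ∀ ω, Z ω ∈ S) {s : ℝ}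
    (h0 : P {ω | Y ω = s} ≠ 0) {δ κ R q m lam : ℝ} (hq : 0 ≤ q) (hm : 0 < m)
    (hqm : q * exp m < 1) (hlam : 0 ≤ lam) (hlamR : lam * R ≤ m / 2)
    (hκ : lam * R * mgfConst q m ≤ δ - κ)
    (hdrift : δ ≤ ∫ ω, (Y ω - Z ω) ∂P[|{ω | Y ω = s}])
    (htail : ∀ j : ℕ, P[|{ω | Y ω = s}] {ω | (j : ℝ) ≤ |Y ω - Z ω|} ≤ ENNReal.ofReal (R * q ^ j)) :
    ∫ ω, exp (lam * Z ω) ∂P[|{ω | Y ω = s}] ≤ exp (-(lam * κ)) * exp (lam * s) := by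
  have : IsProbabilityMeasure P[|{ω | Y ω = s}] := cond_isProbabilityMeasure h0
  have hshift : ∫ ω, exp (lam * Z ω) ∂P[|{ω | Y ω = s}]
      = exp (lam * s) * ∫ ω, exp (-(lam * (Y ω - Z ω))) ∂P[|{ω | Y ω = s}] := by
    rw [← integral_const_mul]
    refine integral_congr_ae ((ae_cond_mem (measurableSet_fiber hY s)).mono
      fun ω (hω : Y ω = s) => ?_)
    show exp (lam * Z ω) = exp (lam * s) * exp (-(lam * (Y ω - Z ω)))
    rw [← exp_add, hω]
    ring_nf
  rw [hshift, mul_comm]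
  gcongr
  exact integral_exp_neg_mul_le (hY.sub hZ) (fun ω => Finset.sub_mem_sub (hYS ω) (hZS ω)) hq hm
    hqm hlam hlamR hκ hdrift htail

end MomentGeneratingFunction

def path {Ω : Type*} (X : ℕ → Ω → ℝ) (t : ℕ) (ω : Ω) : Fin (t + 1) → ℝ := fun u => X u ω

def IsPathDetermined {Ω : Type*} (X : ℕ → Ω → ℝ) (t : ℕ) (G : Set Ω) : Prop :=
  ∀ ω ω', (∀ u ≤ t, X u ω = X u ω') → ω ∈ G → ω' ∈ G

section Path

variable {Ω : Type*} {X : ℕ → Ω → ℝ} {S : Finset ℝ} {t : ℕ} {G : Set Ω}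

lemma path_eq_path_iff {ω ω' : Ω} : path X t ω = path X t ω' ↔ ∀ u ≤ t, X u ω = X u ω' := by
  simp [path, funext_iff, Fin.forall_iff]

lemma path_mem_piFinset (hS : ∀ t ω, X t ω ∈ S) (t : ℕ) (ω : Ω) :
    path X t ω ∈ Fintype.piFinset fun _ => S :=
  Fintype.mem_piFinset.2 fun u => hS u ω

lemma isPathDetermined_fiber (s : ℝ) : IsPathDetermined X t {ω | X t ω = s} :=
  fun _ _ h hω => (h t le_rfl).symm.trans hω

lemma isPathDetermined_forall_lt (b c : ℝ) (t : ℕ) :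
    IsPathDetermined X t {ω | X 0 ω ≤ b ∧ ∀ u ≤ t, c < X u ω} :=
  fun _ _ h hω => ⟨h 0 t.zero_le ▸ hω.1, fun u hu => h u hu ▸ hω.2 u hu⟩

lemma IsPathDetermined.inter {G' : Set Ω} (hG : IsPathDetermined X t G)
    (hG' : IsPathDetermined X t G') : IsPathDetermined X t (G ∩ G') :=
  fun ω ω' h hω => ⟨hG ω ω' h hω.1, hG' ω ω' h hω.2⟩

variable [MeasurableSpace Ω]

lemma measurable_path (hX : ∀ t, Measurable (X t)) (t : ℕ) : Measurable (path X t) :=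
  measurable_pi_lambda _ fun u => hX u

lemma IsPathDetermined.measurableSet (hG : IsPathDetermined X t G) (hX : ∀ t, Measurable (X t))
    (hS : ∀ t ω, X t ω ∈ S) : MeasurableSet G := by
  have hpre : G = path X t ⁻¹' (path X t '' G) := by
    refine (Set.subset_preimage_image _ _).antisymm fun ω ⟨ω', hω', heq⟩ => ?_
    exact hG ω' ω (path_eq_path_iff.1 heq) hω'
  have hfin : (path X t '' G).Finite :=
    (Fintype.piFinset fun _ => S).finite_toSet.subset
      (Set.image_subset_iff.2 fun ω _ => path_mem_piFinset hS t ω)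
  rw [hpre]
  exact measurable_path hX t hfin.measurableSet

end Path

def IsTimeHomogeneousMarkov {Ω : Type*} [MeasurableSpace Ω] (μ : Measure Ω) (X : ℕ → Ω → ℝ)
    (p : ℝ → ℝ → ℝ≥0∞) : Prop :=
  ∀ (t : ℕ) (h : ℕ → ℝ) (s' : ℝ), μ {ω | ∀ u ≤ t, X u ω = h u} ≠ 0 →
    (μ[|{ω | ∀ u ≤ t, X u ω = h u}]) {ω | X (t + 1) ω = s'} = p (h t) s'

section Markov

variable {Ω : Type*} [MeasurableSpace Ω] {μ : Measure Ω} [IsFiniteMeasure μ] {X : ℕ → Ω → ℝ}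
  {S : Finset ℝ} {p : ℝ → ℝ → ℝ≥0∞} {t : ℕ} {G : Set Ω}

lemma IsTimeHomogeneousMarkov.measure_inter_eq_mul (hp : IsTimeHomogeneousMarkov μ X p)
    (hX : ∀ t, Measurable (X t)) (hS : ∀ t ω, X t ω ∈ S) (hG : IsPathDetermined X t G) {s : ℝ}
    (hGs : G ⊆ {ω | X t ω = s}) (s' : ℝ) :
    μ (G ∩ {ω | X (t + 1) ω = s'}) = μ G * p s s' := by
  rw [measure_eq_sum_fiber_inter (measurable_path hX t) (path_mem_piFinset hS t),
    measure_eq_sum_fiber_inter (measurable_path hX t) (path_mem_piFinset hS t) G, Finset.sum_mul]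
  refine Finset.sum_congr rfl fun g _ => ?_
  rw [← Set.inter_assoc]
  rcases eq_or_ne (μ ({ω | path X t ω = g} ∩ G)) 0 with h0 | h0
  · rw [h0, zero_mul]
    exact measure_mono_null Set.inter_subset_left h0
  obtain ⟨ω₀, hω₀g : path X t ω₀ = g, hω₀G⟩ := nonempty_of_measure_ne_zero h0
  -- a path fibre that meets `G` is a cylinder of the Markov property
  have hcyl : {ω | path X t ω = g} ∩ G = {ω | ∀ u ≤ t, X u ω = X u ω₀} := by
    ext ω
    refine ⟨fun ⟨hg, _⟩ => path_eq_path_iff.1 (hg.trans hω₀g.symm), fun h => ?_⟩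
    exact ⟨(path_eq_path_iff.2 h).trans hω₀g, hG ω₀ ω (fun u hu => (h u hu).symm) hω₀G⟩
  have hcyl_meas : MeasurableSet {ω | ∀ u ≤ t, X u ω = X u ω₀} :=
    IsPathDetermined.measurableSet (fun ω ω' h hω u hu => ((h u hu).symm.trans (hω u hu))) hX hS
  rw [hcyl] at h0 ⊢
  rw [← cond_mul_eq_inter hcyl_meas, hp t _ s' h0, ← hGs hω₀G, mul_comm]

lemma IsTimeHomogeneousMarkov.cond_eq_cond_fiber (hp : IsTimeHomogeneousMarkov μ X p)
    (hX : ∀ t, Measurable (X t)) (hS : ∀ t ω, X t ω ∈ S) (hG : IsPathDetermined X t G) {s : ℝ}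
    (hGs : G ⊆ {ω | X t ω = s}) (hG0 : μ G ≠ 0) (s' : ℝ) :
    μ[|G] {ω | X (t + 1) ω = s'} = μ[|{ω | X t ω = s}] {ω | X (t + 1) ω = s'} := by
  have hs0 : μ {ω | X t ω = s} ≠ 0 := fun h => hG0 (measure_mono_null hGs h)
  rw [cond_apply (hG.measurableSet hX hS), cond_apply (measurableSet_fiber (hX t) s),
    hp.measure_inter_eq_mul hX hS hG hGs, hp.measure_inter_eq_mul hX hS (isPathDetermined_fiber s)
      subset_rfl, ← mul_assoc, ← mul_assoc, ENNReal.inv_mul_cancel hG0 (measure_ne_top _ _),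
    ENNReal.inv_mul_cancel hs0 (measure_ne_top _ _)]

lemma IsTimeHomogeneousMarkov.integral_comp_succ_cond_eq (hp : IsTimeHomogeneousMarkov μ X p)
    (hX : ∀ t, Measurable (X t)) (hS : ∀ t ω, X t ω ∈ S) (hG : IsPathDetermined X t G) {s : ℝ}
    (hGs : G ⊆ {ω | X t ω = s}) (hG0 : μ G ≠ 0) (f : ℝ → ℝ) :
    ∫ ω, f (X (t + 1) ω) ∂μ[|G] = ∫ ω, f (X (t + 1) ω) ∂μ[|{ω | X t ω = s}] := by
  simp_rw [integral_comp_eq_sum (hX (t + 1)) (hS (t + 1)), measureReal_def,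
    hp.cond_eq_cond_fiber hX hS hG hGs hG0]

theorem IsTimeHomogeneousMarkov.setIntegral_comp_succ_le (hp : IsTimeHomogeneousMarkov μ X p)
    (hX : ∀ t, Measurable (X t)) (hS : ∀ t ω, X t ω ∈ S) (hG : IsPathDetermined X t G)
    {f g : ℝ → ℝ}
    (hfg : ∀ s, μ (G ∩ {ω | X t ω = s}) ≠ 0 →
      ∫ ω, f (X (t + 1) ω) ∂μ[|{ω | X t ω = s}] ≤ g s) :
    ∫ ω in G, f (X (t + 1) ω) ∂μ ≤ ∫ ω in G, g (X t ω) ∂μ := by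
  rw [setIntegral_eq_sum_fiber (hX t) (hS t) (integrable_comp_of_forall_mem (hX (t + 1)) (hS _) f),
    setIntegral_eq_sum_fiber (hX t) (hS t) (integrable_comp_of_forall_mem (hX t) (hS t) g)]
  refine Finset.sum_le_sum fun s _ => ?_
  set H := G ∩ {ω | X t ω = s}
  have hH : IsPathDetermined X t H := hG.inter (isPathDetermined_fiber s)
  have hHs : H ⊆ {ω | X t ω = s} := Set.inter_subset_right
  rcases eq_or_ne (μ H) 0 with h0 | h0
  · rw [setIntegral_measure_zero _ h0, setIntegral_measure_zero _ h0]
  calc ∫ ω in H, f (X (t + 1) ω) ∂μ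
      = μ.real H * ∫ ω, f (X (t + 1) ω) ∂μ[|{ω | X t ω = s}] := by
        rw [setIntegral_eq_measureReal_mul_integral_cond,
          hp.integral_comp_succ_cond_eq hX hS hH hHs h0]
    _ ≤ μ.real H * g s := by gcongr; exact hfg s h0
    _ = ∫ _ in H, g s ∂μ := by rw [setIntegral_const, smul_eq_mul]
    _ = ∫ ω in H, g (X t ω) ∂μ :=
        setIntegral_congr_fun (hH.measurableSet hX hS) fun ω hω => by
          rw [show X t ω = s from hHs hω]

theorem IsTimeHomogeneousMarkov.setIntegral_exp_le (hp : IsTimeHomogeneousMarkov μ X p)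
    (hX : ∀ t, Measurable (X t)) (hS : ∀ t ω, X t ω ∈ S) {lam κ b c : ℝ} (hlam : 0 ≤ lam)
    (hmgf : ∀ t s, c < s → μ {ω | X t ω = s} ≠ 0 →
      ∫ ω, exp (lam * X (t + 1) ω) ∂μ[|{ω | X t ω = s}] ≤ exp (-(lam * κ)) * exp (lam * s))
    (N : ℕ) :
    ∫ ω in {ω | X 0 ω ≤ b ∧ ∀ u ≤ N, c < X u ω}, exp (lam * X N ω) ∂μ
      ≤ exp (-(lam * κ)) ^ N * (exp (lam * b) * μ.real {ω | X 0 ω ≤ b}) := by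
  have hint (t : ℕ) : Integrable (fun ω => exp (lam * X t ω)) μ :=
    integrable_comp_of_forall_mem (hX t) (hS t) fun x => exp (lam * x)
  induction N with
  | zero =>
    calc ∫ ω in {ω | X 0 ω ≤ b ∧ ∀ u ≤ 0, c < X u ω}, exp (lam * X 0 ω) ∂μ
        ≤ ∫ _ in {ω | X 0 ω ≤ b ∧ ∀ u ≤ 0, c < X u ω}, exp (lam * b) ∂μ := by
          refine setIntegral_mono_on (hint 0).integrableOn (integrable_const _).integrableOn
            ((isPathDetermined_forall_lt b c 0).measurableSet hX hS) fun ω hω => ?_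
          exact exp_le_exp.2 (by gcongr; exact hω.1)
      _ ≤ exp (-(lam * κ)) ^ 0 * (exp (lam * b) * μ.real {ω | X 0 ω ≤ b}) := by
          rw [setIntegral_const, smul_eq_mul, pow_zero, one_mul, mul_comm]
          gcongr
          · exact measure_ne_top _ _
          · exact And.left
  | succ N ih =>
    calc ∫ ω in {ω | X 0 ω ≤ b ∧ ∀ u ≤ N + 1, c < X u ω}, exp (lam * X (N + 1) ω) ∂μ
        ≤ ∫ ω in {ω | X 0 ω ≤ b ∧ ∀ u ≤ N, c < X u ω}, exp (lam * X (N + 1) ω) ∂μ :=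
          setIntegral_mono_set (hint _).integrableOn (ae_of_all _ fun ω => (exp_pos _).le)
            (Eventually.of_forall fun ω hω => ⟨hω.1, fun u hu => hω.2 u (hu.trans N.le_succ)⟩)
      _ ≤ ∫ ω in {ω | X 0 ω ≤ b ∧ ∀ u ≤ N, c < X u ω}, exp (-(lam * κ)) * exp (lam * X N ω) ∂μ := by
          refine hp.setIntegral_comp_succ_le (f := fun x => exp (lam * x))
            (g := fun x => exp (-(lam * κ)) * exp (lam * x)) hX hS
            (isPathDetermined_forall_lt b c N) fun s hs => ?_
          obtain ⟨ω, hωG, hωs : X N ω = s⟩ := nonempty_of_measure_ne_zero hs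
          exact hmgf N s (hωs ▸ hωG.2 N le_rfl)
            fun h => hs (measure_mono_null Set.inter_subset_right h)
      _ = exp (-(lam * κ)) *
            ∫ ω in {ω | X 0 ω ≤ b ∧ ∀ u ≤ N, c < X u ω}, exp (lam * X N ω) ∂μ :=
          integral_const_mul _ _
      _ ≤ exp (-(lam * κ)) ^ (N + 1) * (exp (lam * b) * μ.real {ω | X 0 ω ≤ b}) := by
          rw [pow_succ', mul_assoc]
          gcongr

theorem IsTimeHomogeneousMarkov.cond_forall_lt_le (hp : IsTimeHomogeneousMarkov μ X p)
    (hX : ∀ t, Measurable (X t)) (hS : ∀ t ω, X t ω ∈ S) {lam κ b c : ℝ} (hlam : 0 ≤ lam)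
    (hmgf : ∀ t s, c < s → μ {ω | X t ω = s} ≠ 0 →
      ∫ ω, exp (lam * X (t + 1) ω) ∂μ[|{ω | X t ω = s}] ≤ exp (-(lam * κ)) * exp (lam * s))
    (N : ℕ) :
    μ[|{ω | X 0 ω ≤ b}] {ω | ∀ u ≤ N, c < X u ω}
      ≤ ENNReal.ofReal (exp (lam * (b - c)) * exp (-(lam * κ)) ^ N) := by
  set G := {ω | X 0 ω ≤ b ∧ ∀ u ≤ N, c < X u ω}
  have hGm : MeasurableSet G := (isPathDetermined_forall_lt b c N).measurableSet hX hS
  have hchebyshev : exp (lam * c) * μ.real G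
      ≤ exp (-(lam * κ)) ^ N * (exp (lam * b) * μ.real {ω | X 0 ω ≤ b}) := by
    refine le_trans ?_ (hp.setIntegral_exp_le hX hS hlam hmgf N)
    rw [mul_comm (exp _), ← smul_eq_mul, ← setIntegral_const]
    refine setIntegral_mono_on (integrable_const _).integrableOn
      (integrable_comp_of_forall_mem (hX N) (hS N) fun x => exp (lam * x)).integrableOn hGm
      fun ω hω => ?_
    exact exp_le_exp.2 (by gcongr; exact (hω.2 N le_rfl).le)
  rw [ENNReal.le_ofReal_iff_toReal_le (measure_ne_top _ _) (by positivity),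
    cond_apply (measurableSet_le (hX 0) measurable_const), ENNReal.toReal_mul, ENNReal.toReal_inv]
  change (μ.real {ω | X 0 ω ≤ b})⁻¹ * μ.real G ≤ _
  rcases (measureReal_nonneg (μ := μ) (s := {ω | X 0 ω ≤ b})).eq_or_lt with h0 | hpos
  · rw [← h0, inv_zero, zero_mul]
    positivity
  rw [inv_mul_le_iff₀ hpos, mul_sub, exp_sub, ← mul_le_mul_iff_right₀ (exp_pos (lam * c))]
  calc _ ≤ _ := hchebyshev
    _ = _ := by field_simp

theorem IsTimeHomogeneousMarkov.cond_forall_lt_le' (hp : IsTimeHomogeneousMarkov μ X p)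
    (hX : ∀ t, Measurable (X t)) (hS : ∀ t ω, X t ω ∈ S) {lam κ b c τ : ℝ} (hlam : 0 ≤ lam)
    (hκ : 0 ≤ κ)
    (hmgf : ∀ t s, c < s → μ {ω | X t ω = s} ≠ 0 →
      ∫ ω, exp (lam * X (t + 1) ω) ∂μ[|{ω | X t ω = s}] ≤ exp (-(lam * κ)) * exp (lam * s))
    (hτ : 0 < τ) :
    μ[|{ω | X 0 ω ≤ b}] {ω | ∀ t : ℕ, (t : ℝ) < τ → c < X t ω}
      ≤ ENNReal.ofReal (exp (lam * (b - c) - lam * κ * (τ - 1))) := by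
  have hceil : 1 ≤ ⌈τ⌉₊ := Nat.one_le_ceil_iff.2 hτ
  have hsub : {ω | ∀ t : ℕ, (t : ℝ) < τ → c < X t ω} ⊆ {ω | ∀ u ≤ ⌈τ⌉₊ - 1, c < X u ω} :=
    fun ω hω u hu => hω u (Nat.lt_ceil.1 (by omega))
  refine (measure_mono hsub).trans ((hp.cond_forall_lt_le hX hS hlam hmgf _).trans
    (ENNReal.ofReal_le_ofReal ?_))
  rw [← exp_nat_mul, ← exp_add, Nat.cast_sub hceil, Nat.cast_one]
  exact exp_le_exp.2 (by nlinarith [Nat.le_ceil τ, mul_nonneg hlam hκ])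

end Markov

lemma tail_exponent_le {lam κ δ η L : ℝ} (hlam : 0 ≤ lam) (hδ : 0 < δ) (hη : 0 < η)
    (hκ : κ * (2 * (1 + η)) = δ * (2 + η)) (hL : 4 * δ ≤ η * L) :
    lam * L - lam * κ * ((1 + η) * L / δ - 1) ≤ -(lam * (η * L / 4)) := by
  have hκτ : κ * ((1 + η) * L / δ) = (2 + η) / 2 * L := by
    field_simp
    linear_combination L * hκ
  have hκδ : κ ≤ δ := by nlinarith
  nlinarith [mul_le_mul_of_nonneg_left (hκδ.trans (by linarith : δ ≤ η * L / 4)) hlam]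

theorem stmt1_general
    (a b δ ξ η : ℝ) (hδ : 0 < δ) (hξ : 0 < ξ) (hη : 0 < η)
    (hab : a < b)
    (r : ℕ → ℝ) (hrpos : ∀ n, 0 < r n) :
    ∃ ρ : ℝ, 0 < ρ ∧ ∃ n₀ : ℕ, ∀ n : ℕ, n₀ ≤ n →
      ∀ (Ω : Type) (_ : MeasurableSpace Ω) (μ : Measure Ω), IsProbabilityMeasure μ →
      ∀ (S : Finset ℝ) (X : ℕ → Ω → ℝ),
        (∀ t ω, X t ω ∈ S) →
        (∀ t, Measurable (X t)) →
        -- time-homogeneous Markov property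
        (∃ p : ℝ → ℝ → ℝ≥0∞, ∀ (t : ℕ) (h : ℕ → ℝ) (s' : ℝ),
          μ {ω | ∀ u ≤ t, X u ω = h u} ≠ 0 →
          (μ[|{ω | ∀ u ≤ t, X u ω = h u}]) {ω | X (t + 1) ω = s'} = p (h t) s') →
        -- (1) drift condition
        (∀ (t : ℕ) (s : ℝ), s ∈ S → a * n < s → μ {ω | X t ω = s} ≠ 0 →
          δ ≤ ∫ ω, (X t ω - X (t + 1) ω) ∂(μ[|{ω | X t ω = s}])) →
        -- (2) step-size condition
        (∀ (t : ℕ) (s : ℝ) (j : ℕ), s ∈ S → μ {ω | X t ω = s} ≠ 0 →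
          (μ[|{ω | X t ω = s}]) {ω | (j : ℝ) ≤ |X t ω - X (t + 1) ω|}
            ≤ ENNReal.ofReal (r n * ((1 + ξ)⁻¹) ^ j)) →
        μ {ω | X 0 ω ≤ b * n} ≠ 0 →
        (μ[|{ω | X 0 ω ≤ b * n}])
            {ω | ∀ t : ℕ, (t : ℝ) < (1 + η) * (b - a) * n / δ → a * n < X t ω}
          ≤ ENNReal.ofReal (Real.exp (-(ρ * n / r n))) := by
  obtain ⟨m, hm, hqm⟩ := exists_pos_mul_exp_lt_one (inv_pos.2 (by linarith : 0 < 1 + ξ))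
    (inv_lt_one_of_one_lt₀ (by linarith))
  set K := mgfConst (1 + ξ)⁻¹ m
  -- `κ < δ` is the drift that survives the second-order term; the horizon `(1 + η)(b - a) n / δ`
  -- then carries `(1 + η / 2)(b - a) n` of drift, leaving the margin that becomes `ρ n / r n`
  set κ := δ * (2 + η) / (2 * (1 + η))
  set θ := min (m / 2) ((δ - κ) / K)
  have hκδ : κ < δ := by
    rw [div_lt_iff₀ (by positivity)]
    nlinarith
  have hθ : 0 < θ := lt_min (by positivity) (div_pos (by linarith) (mgfConst_pos hm hqm))
  have hba : 0 < b - a := by linarith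
  refine ⟨θ * (b - a) * η / 4, by positivity, ⌈4 * δ / ((b - a) * η)⌉₊, ?_⟩
  intro n hn Ω _ μ _ S X hS hX ⟨p, hp⟩ hdrift hstep _
  set lam := θ / r n
  have hlam : 0 ≤ lam := div_nonneg hθ.le (hrpos n).le
  have hlamr : lam * r n = θ := div_mul_cancel₀ θ (hrpos n).ne'
  have hθK : lam * r n * K ≤ δ - κ := by
    rw [hlamr, ← le_div_iff₀ (mgfConst_pos hm hqm)]
    exact min_le_right _ _
  have hmgf (t : ℕ) (s : ℝ) (hs : a * n < s) (h0 : μ {ω | X t ω = s} ≠ 0) :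
      ∫ ω, exp (lam * X (t + 1) ω) ∂μ[|{ω | X t ω = s}] ≤ exp (-(lam * κ)) * exp (lam * s) := by
    obtain ⟨ω, hω : X t ω = s⟩ := nonempty_of_measure_ne_zero h0
    have hsS : s ∈ S := hω ▸ hS t ω
    exact integral_exp_mul_le_of_drift (hX t) (hX (t + 1)) (hS t) (hS (t + 1)) h0
      (by positivity) hm hqm hlam (hlamr ▸ min_le_left _ _) hθK (hdrift t s hsS hs h0)
      fun j => hstep t s j hsS h0
  have hL : 4 * δ ≤ η * ((b - a) * n) := by
    have := (Nat.le_ceil _).trans (Nat.cast_le.2 hn : (⌈4 * δ / ((b - a) * η)⌉₊ : ℝ) ≤ n)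
    rw [div_le_iff₀ (by positivity)] at this
    linarith
  have hn0 : (0 : ℝ) < n := Nat.cast_pos.2 ((Nat.ceil_pos.2 (by positivity)).trans_le hn)
  refine (IsTimeHomogeneousMarkov.cond_forall_lt_le' hp hX hS hlam (by positivity) hmgf
    (by positivity)).trans (ENNReal.ofReal_le_ofReal (exp_le_exp.2 ?_))
  have hκ : κ * (2 * (1 + η)) = δ * (2 + η) := by
    simp only [κ]
    field_simp
  have := tail_exponent_le hlam hδ hη hκ hL
  have hρ : θ * (b - a) * η / 4 * n / r n = lam * (η * ((b - a) * n) / 4) := by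
    simp only [lam]
    ring
  rw [hρ]
  convert this using 2 <;> ring

/-- **Additive drift, upper tail bound.**  For all constants `a, b, δ, ξ, η > 0`
with `a < b` and every `r = r(n) = o(n/log n)` there exist `ρ > 0` and `n₀`
such that for all `n ≥ n₀` the following holds.  Let `X` be a time-homogeneous
Markov chain on a finite state space `S ⊆ ℝ` satisfying the drift condition (1)
and the step-size condition (2).  Then with `T_a = min{t : X t ≤ a·n}`,
`Pr[T_a ≥ (1+η)(b−a)n/δ | X 0 ≤ b·n] ≤ e^{−ρ·n/r(n)}`.  The event
`{T_a ≥ τ}` is expressed as `{∀ t < τ, X t > a·n}`. -/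
theorem stmt1
    (a b δ ξ η : ℝ) (ha : 0 < a) (hb : 0 < b) (hδ : 0 < δ) (hξ : 0 < ξ) (hη : 0 < η)
    (hab : a < b)
    (r : ℕ → ℝ) (hrpos : ∀ n, 0 < r n)
    (hr : r =o[atTop] fun n : ℕ => (n : ℝ) / Real.log n) :
    ∃ ρ : ℝ, 0 < ρ ∧ ∃ n₀ : ℕ, ∀ n : ℕ, n₀ ≤ n →
      ∀ (Ω : Type) (_ : MeasurableSpace Ω) (μ : Measure Ω), IsProbabilityMeasure μ →
      ∀ (S : Finset ℝ) (X : ℕ → Ω → ℝ),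
        (∀ t ω, X t ω ∈ S) →
        (∀ t, Measurable (X t)) →
        -- time-homogeneous Markov property
        (∃ p : ℝ → ℝ → ℝ≥0∞, ∀ (t : ℕ) (h : ℕ → ℝ) (s' : ℝ),
          μ {ω | ∀ u ≤ t, X u ω = h u} ≠ 0 →
          (μ[|{ω | ∀ u ≤ t, X u ω = h u}]) {ω | X (t + 1) ω = s'} = p (h t) s') →
        -- (1) drift condition
        (∀ (t : ℕ) (s : ℝ), s ∈ S → a * n < s → μ {ω | X t ω = s} ≠ 0 →
          δ ≤ ∫ ω, (X t ω - X (t + 1) ω) ∂(μ[|{ω | X t ω = s}])) →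
        -- (2) step-size condition
        (∀ (t : ℕ) (s : ℝ) (j : ℕ), s ∈ S → μ {ω | X t ω = s} ≠ 0 →
          (μ[|{ω | X t ω = s}]) {ω | (j : ℝ) ≤ |X t ω - X (t + 1) ω|}
            ≤ ENNReal.ofReal (r n * ((1 + ξ)⁻¹) ^ j)) →
        μ {ω | X 0 ω ≤ b * n} ≠ 0 →
        (μ[|{ω | X 0 ω ≤ b * n}])
            {ω | ∀ t : ℕ, (t : ℝ) < (1 + η) * (b - a) * n / δ → a * n < X t ω}
          ≤ ENNReal.ofReal (Real.exp (-(ρ * n / r n))) :=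
  stmt1_general a b δ ξ η hδ hξ hη hab r hrpos
end

section
/- (Generic easyness proof.) Fix constants δ > 0 and C > 0. For each n, consider the following Markov chain on {0,1}^n: the process starts at an arbitrary point x^(0); in each round, given the current point x, an offspring y is drawn from a probability distribution K_x on {0,1}^n (which may depend arbitrarily on x and n), and x is replaced by y if and only if f(y) ≥ f(x), where f : {0,1}^n → ℝ is strictly monotone. For parent x and offspring y ~ K_x, let s₀₁ be the number of coordinates i with x_i = 0 and y_i = 1, and s₁₀ the number of coordinates i with x_i = 1 and y_i = 0. Assume that for all n and all x ∈ {0,1}^n: (1) E[s₁₀ | parent = x and s₀₁ > 0] ≤ 1 − δ, and (2) Pr[s₀₁ > 0 | parent = x] ≥ C·(n − OM(x))/n. Then there exists a constant C′ > 0 such that, for every sequence (f_n) of strictly monotone functions f_n : {0,1}^n → ℝ, the probability that the process run on f_n reaches the all-ones string within C′·n·ln n rounds tends to 1 as n → ∞. -/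
/-!
The number `Z` of zero-bits is a multiplicative drift potential. By strict monotonicity an
offspring with `s₀₁ = 0` is rejected (or equals the parent), while an offspring with `s₀₁ > 0`
leads to at most `Z + s₁₀ - 1` zero-bits whether or not it is accepted (if `s₁₀ = 0` it dominates
the parent and is accepted). Hence, with `δ' = min δ 1`, one round lowers `E[Z]` by at least
`Pr[s₀₁ > 0] · (1 - E[s₁₀ | s₀₁ > 0]) ≥ δ' C Z / n`, i.e. `E[Z'] ≤ (1 - δ'C/n) Z`.
After `T = ⌈(2 / δ'C) n ln n⌉` rounds `E[Z] ≤ n e^{-δ'CT/n} ≤ 1/n`, and Markov's inequality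
bounds the probability that the optimum has not been reached by `1/n`.
-/

open MeasureTheory ProbabilityTheory Filter Topology
open scoped ENNReal

attribute [local instance] Classical.propDecidable

/-- `f : {0,1}^n → ℝ` is strictly monotone: `x ≠ y` and `yᵢ ≤ xᵢ` for all `i`
implies `f y < f x`. -/
def StrictMonoBool {n : ℕ} (f : (Fin n → Bool) → ℝ) : Prop :=
  ∀ x y : Fin n → Bool, x ≠ y → (∀ i, y i ≤ x i) → f y < f x

/-- `OM(x)`: the number of one-bits of `x`. -/
def onesCount {n : ℕ} (x : Fin n → Bool) : ℕ :=
  (Finset.univ.filter fun i => x i = true).card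

/-- `s₀₁`: number of coordinates that are `0` in the parent `x` and `1` in the
offspring `y`. -/
def s01 {n : ℕ} (x y : Fin n → Bool) : ℕ :=
  (Finset.univ.filter fun i => x i = false ∧ y i = true).card

/-- `s₁₀`: number of coordinates that are `1` in the parent `x` and `0` in the
offspring `y`. -/
def s10 {n : ℕ} (x y : Fin n → Bool) : ℕ :=
  (Finset.univ.filter fun i => x i = true ∧ y i = false).card

open Finset

def zerosCount {n : ℕ} (x : Fin n → Bool) : ℕ :=
  (univ.filter fun i => x i = false).card

section BitCounts

variable {n : ℕ}

lemma zerosCount_add_s01 (x y : Fin n → Bool) :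
    zerosCount y + s01 x y = zerosCount x + s10 x y := by
  simp only [zerosCount, s01, s10, card_filter, ← sum_add_distrib]
  refine sum_congr rfl fun i _ => ?_
  cases x i <;> cases y i <;> simp

lemma zerosCount_le (x : Fin n → Bool) : zerosCount x ≤ n :=
  (card_filter_le _ _).trans_eq (card_fin n)

lemma zerosCount_eq_zero_iff (x : Fin n → Bool) : zerosCount x = 0 ↔ x = fun _ => true := by
  simp [zerosCount, filter_eq_empty_iff, funext_iff]

lemma zerosCount_add_onesCount (x : Fin n → Bool) : zerosCount x + onesCount x = n := by
  simpa [zerosCount, onesCount, add_comm] using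
    card_filter_add_card_filter_not (s := univ) fun i => x i = true

lemma one_le_zerosCount_iff (x : Fin n → Bool) :
    1 ≤ (zerosCount x : ℝ≥0∞) ↔ x ≠ fun _ => true := by
  rw [Nat.one_le_cast, Nat.one_le_iff_ne_zero, Ne, zerosCount_eq_zero_iff]

lemma le_of_s01_eq_zero {x y : Fin n → Bool} (h : s01 x y = 0) (i : Fin n) : y i ≤ x i := by
  simp only [s01, card_eq_zero, filter_eq_empty_iff, mem_univ, true_implies] at h
  have := @h i
  cases hx : x i <;> cases hy : y i <;> simp_all

lemma le_of_s10_eq_zero {x y : Fin n → Bool} (h : s10 x y = 0) (i : Fin n) : x i ≤ y i := by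
  simp only [s10, card_eq_zero, filter_eq_empty_iff, mem_univ, true_implies] at h
  have := @h i
  cases hx : x i <;> cases hy : y i <;> simp_all

lemma ne_of_s01_pos {x y : Fin n → Bool} (h : 0 < s01 x y) : x ≠ y := by
  rintro rfl
  simp [s01] at h

end BitCounts

lemma PMF.sum_coe_eq_one {α : Type*} [Fintype α] (p : PMF α) : ∑ a, p a = 1 := by
  simpa [tsum_fintype] using p.tsum_coe

section ElitistStep

variable {n : ℕ} {f : (Fin n → Bool) → ℝ}

noncomputable def elitistStep (f : (Fin n → Bool) → ℝ) (x y : Fin n → Bool) : Fin n → Bool :=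
  if f x ≤ f y then y else x

lemma elitistStep_of_s01_eq_zero (hf : StrictMonoBool f) {x y : Fin n → Bool}
    (h : s01 x y = 0) : elitistStep f x y = x := by
  rcases eq_or_ne y x with rfl | hyx
  · simp [elitistStep]
  · exact if_neg (not_le.2 (hf x y hyx.symm (le_of_s01_eq_zero h)))

lemma zerosCount_elitistStep_add_one_le (hf : StrictMonoBool f) {x y : Fin n → Bool}
    (h : 0 < s01 x y) : zerosCount (elitistStep f x y) + 1 ≤ zerosCount x + s10 x y := by
  have hZ := zerosCount_add_s01 x y
  rcases Nat.eq_zero_or_pos (s10 x y) with h10 | h10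
  · have hacc : f x < f y := hf y x (ne_of_s01_pos h).symm (le_of_s10_eq_zero h10)
    rw [elitistStep, if_pos hacc.le]
    omega
  · unfold elitistStep
    split_ifs <;> omega

lemma mul_zerosCount_elitistStep_add_le (hf : StrictMonoBool f) (p : ℝ≥0∞)
    (x y : Fin n → Bool) :
    p * zerosCount (elitistStep f x y) + (if 0 < s01 x y then p else 0)
      ≤ p * zerosCount x + (if 0 < s01 x y then p * s10 x y else 0) := by
  split_ifs with h
  · have hle : ((zerosCount (elitistStep f x y) + 1 : ℕ) : ℝ≥0∞) ≤ (zerosCount x + s10 x y : ℕ) :=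
      Nat.cast_le.2 (zerosCount_elitistStep_add_one_le hf h)
    push_cast at hle
    calc p * zerosCount (elitistStep f x y) + p
        = p * (zerosCount (elitistStep f x y) + 1) := by ring
      _ ≤ p * (zerosCount x + s10 x y) := by gcongr
      _ = p * zerosCount x + p * s10 x y := by ring
  · rw [elitistStep_of_s01_eq_zero hf (by omega)]

lemma sum_mul_zerosCount_elitistStep_add_le (hf : StrictMonoBool f) (p : PMF (Fin n → Bool))
    (x : Fin n → Bool) :
    ∑ y, p y * zerosCount (elitistStep f x y) + ∑ y, (if 0 < s01 x y then p y else 0)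
      ≤ zerosCount x + ∑ y, (if 0 < s01 x y then p y * s10 x y else 0) := by
  calc ∑ y, p y * zerosCount (elitistStep f x y) + ∑ y, (if 0 < s01 x y then p y else 0)
      ≤ ∑ y, (p y * zerosCount x + if 0 < s01 x y then p y * s10 x y else 0) := by
        rw [← sum_add_distrib]
        exact sum_le_sum fun y _ => mul_zerosCount_elitistStep_add_le hf (p y) x y
    _ = _ := by rw [sum_add_distrib, ← sum_mul, p.sum_coe_eq_one, one_mul]

end ElitistStep

lemma ENNReal.le_one_sub_mul_of_add_mul_le {a q z : ℝ≥0∞} (hz : z ≠ ⊤) (h : a + q * z ≤ z) :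
    a ≤ (1 - q) * z := by
  rw [ENNReal.sub_mul fun _ _ => hz, one_mul]
  exact ENNReal.le_sub_of_add_le_right (ne_top_of_le_ne_top hz (le_add_self.trans h)) h

lemma ENNReal.add_ofReal_min_mul_le {a b z : ℝ≥0∞} {δ : ℝ} (hδ : 0 ≤ δ) (hb : b ≠ ⊤)
    (h : a + b ≤ z + ENNReal.ofReal (1 - δ) * b) : a + ENNReal.ofReal (min δ 1) * b ≤ z := by
  have hclamp : ENNReal.ofReal (1 - δ) = ENNReal.ofReal (1 - min δ 1) := by
    rcases le_total δ 1 with hδ1 | hδ1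
    · rw [min_eq_left hδ1]
    · rw [min_eq_right hδ1, sub_self, ENNReal.ofReal_zero,
        ENNReal.ofReal_of_nonpos (by linarith)]
  have hsplit : ENNReal.ofReal (min δ 1) * b + ENNReal.ofReal (1 - δ) * b = b := by
    rw [hclamp, ← add_mul, ← ENNReal.ofReal_add (le_min hδ zero_le_one)
      (sub_nonneg.2 (min_le_right _ _)), add_sub_cancel, ENNReal.ofReal_one, one_mul]
  rw [← ENNReal.add_le_add_iff_right (ENNReal.mul_ne_top ENNReal.ofReal_ne_top hb), add_assoc,
    hsplit]
  exact h

theorem sum_mul_zerosCount_elitistStep_le {n : ℕ} {f : (Fin n → Bool) → ℝ} {δ C : ℝ}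
    (hδ : 0 ≤ δ) (hf : StrictMonoBool f) (p : PMF (Fin n → Bool)) (x : Fin n → Bool)
    (h1 : (∑ y, if 0 < s01 x y then p y else 0) ≠ 0 →
      (∑ y, if 0 < s01 x y then p y * (s10 x y : ℝ≥0∞) else 0)
        ≤ ENNReal.ofReal (1 - δ) * ∑ y, if 0 < s01 x y then p y else 0)
    (h2 : ENNReal.ofReal (C * ((n : ℝ) - (onesCount x : ℝ)) / (n : ℝ))
      ≤ ∑ y, if 0 < s01 x y then p y else 0) :
    ∑ y, p y * zerosCount (elitistStep f x y)
      ≤ (1 - ENNReal.ofReal (min δ 1 * C / n)) * zerosCount x := by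
  set A := ∑ y, if 0 < s01 x y then p y else 0
  have hA_ne_top : A ≠ ⊤ := by
    refine ne_top_of_le_ne_top ENNReal.one_ne_top ?_
    calc A ≤ ∑ y, p y := sum_le_sum fun y _ => by split_ifs <;> simp only [le_refl, zero_le]
      _ = 1 := p.sum_coe_eq_one
  have hB : (∑ y, if 0 < s01 x y then p y * (s10 x y : ℝ≥0∞) else 0)
      ≤ ENNReal.ofReal (1 - δ) * A := by
    rcases eq_or_ne A 0 with hA0 | hA0
    · refine (sum_eq_zero fun y _ => ?_).trans_le zero_le
      have hy := (sum_eq_zero_iff.1 hA0) y (mem_univ y)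
      split_ifs at hy ⊢ <;> simp [hy]
    · exact h1 hA0
  have hZ : (n : ℝ) - onesCount x = zerosCount x := by
    have := zerosCount_add_onesCount x
    rw [sub_eq_iff_eq_add]; exact_mod_cast this.symm
  apply ENNReal.le_one_sub_mul_of_add_mul_le (ENNReal.natCast_ne_top _)
  calc ∑ y, p y * zerosCount (elitistStep f x y) + ENNReal.ofReal (min δ 1 * C / n) * zerosCount x
      = ∑ y, p y * zerosCount (elitistStep f x y)
          + ENNReal.ofReal (min δ 1) * ENNReal.ofReal (C * zerosCount x / n) := by
        rw [← ENNReal.ofReal_natCast, ← ENNReal.ofReal_mul' (Nat.cast_nonneg _),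
          ← ENNReal.ofReal_mul (le_min hδ zero_le_one)]
        ring_nf
    _ ≤ ∑ y, p y * zerosCount (elitistStep f x y) + ENNReal.ofReal (min δ 1) * A := by
        rw [← hZ]; gcongr
    _ ≤ zerosCount x := ENNReal.add_ofReal_min_mul_le hδ hA_ne_top
        ((sum_mul_zerosCount_elitistStep_add_le hf p x).trans (by gcongr))

section PathPotential

variable {α Ω : Type*} {X : ℕ → Ω → α}

def pathSet (X : ℕ → Ω → α) (t : ℕ) (g : Fin (t + 1) → α) : Set Ω :=
  {ω | ∀ u : Fin (t + 1), X u ω = g u}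

lemma pathSet_snoc (t : ℕ) (g : Fin (t + 1) → α) (z : α) :
    pathSet X (t + 1) (Fin.snoc g z) = pathSet X t g ∩ {ω | X (t + 1) ω = z} := by
  ext ω
  simp only [pathSet, Set.mem_ofPred_eq, Set.mem_inter_iff, Fin.forall_fin_succ']
  simp

lemma pathSet_eq_setOf_forall_le (t : ℕ) (g : Fin (t + 1) → α) :
    pathSet X t g = {ω | ∀ u ≤ t, X u ω = g ⟨min u t, by omega⟩} := by
  ext ω
  simp only [pathSet, Set.mem_ofPred_eq, Fin.forall_iff, Nat.lt_succ_iff]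
  refine forall₂_congr fun u hu => ?_
  simp [min_eq_left hu]

variable [MeasurableSpace Ω] {μ : Measure Ω}

def HasTransition (μ : Measure Ω) (X : ℕ → Ω → α) (P : α → α → ℝ≥0∞) : Prop :=
  ∀ (t : ℕ) (h : ℕ → α), μ {ω | ∀ u ≤ t, X u ω = h u} ≠ 0 →
    ∀ z, μ[|{ω | ∀ u ≤ t, X u ω = h u}] {ω | X (t + 1) ω = z} = P (h t) z

lemma measure_pathSet_snoc_le [IsFiniteMeasure μ] {P : α → α → ℝ≥0∞}
    (hM : HasTransition μ X P)
    (t : ℕ) (g : Fin (t + 1) → α) (z : α) :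
    μ (pathSet X (t + 1) (Fin.snoc g z)) ≤ μ (pathSet X t g) * P (g (Fin.last t)) z := by
  rw [pathSet_snoc]
  rcases eq_or_ne (μ (pathSet X t g)) 0 with h0 | h0
  · exact (measure_mono Set.inter_subset_left).trans (by simp [h0])
  have hcond := hM t (fun u => g ⟨min u t, by omega⟩)
    (by rwa [← pathSet_eq_setOf_forall_le]) z
  rw [← pathSet_eq_setOf_forall_le] at hcond
  calc μ (pathSet X t g ∩ {ω | X (t + 1) ω = z})
      ≤ μ.restrict (pathSet X t g) {ω | X (t + 1) ω = z} := by
        rw [Set.inter_comm]; exact Measure.le_restrict_apply _ _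
    _ = μ (pathSet X t g) * μ[|pathSet X t g] {ω | X (t + 1) ω = z} := by
        rw [ProbabilityTheory.cond, Measure.smul_apply, smul_eq_mul, ← mul_assoc,
          ENNReal.mul_inv_cancel h0 (measure_ne_top _ _), one_mul]
    _ = μ (pathSet X t g) * P (g (Fin.last t)) z := by
        rw [hcond, Fin.last]
        simp_rw [min_self]

/-- `X` is not assumed measurable, so the expectation of `V (X t)` is replaced by this sum over
the finitely many histories up to time `t`. -/
noncomputable def pathPotential [Fintype α] (μ : Measure Ω) (X : ℕ → Ω → α) (V : α → ℝ≥0∞)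
    (t : ℕ) : ℝ≥0∞ :=
  ∑ g : Fin (t + 1) → α, μ (pathSet X t g) * V (g (Fin.last t))

variable [Fintype α]

lemma pathPotential_zero_le [IsProbabilityMeasure μ] {x₀ : α} (hX0 : ∀ ω, X 0 ω = x₀)
    (V : α → ℝ≥0∞) : pathPotential μ X V 0 ≤ V x₀ := by
  calc pathPotential μ X V 0 ≤ ∑ g : Fin 1 → α, if g = (fun _ => x₀) then V x₀ else 0 := by
        refine sum_le_sum fun g _ => ?_
        split_ifs with hg
        · subst hg; exact mul_le_of_le_one_left zero_le prob_le_one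
        · have hempty : pathSet X 0 g = ∅ := by
            refine Set.eq_empty_of_forall_notMem fun ω hω => hg (funext fun u => ?_)
            rw [Fin.fin_one_eq_zero u, ← hω 0, Fin.val_zero, hX0]
          simp [hempty]
    _ = V x₀ := by simp

lemma pathPotential_succ_le [IsFiniteMeasure μ] {P : α → α → ℝ≥0∞} {ρ : ℝ≥0∞} {V : α → ℝ≥0∞}
    (hM : HasTransition μ X P)
    (hV : ∀ x, ∑ z, P x z * V z ≤ ρ * V x) (t : ℕ) :
    pathPotential μ X V (t + 1) ≤ ρ * pathPotential μ X V t := by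
  calc pathPotential μ X V (t + 1)
      = ∑ g : Fin (t + 1) → α, ∑ z, μ (pathSet X (t + 1) (Fin.snoc g z)) * V z := by
        rw [pathPotential, ← (Fin.snocEquiv fun _ => α).sum_comp, Fintype.sum_prod_type,
          sum_comm]
        simp [Fin.snocEquiv]
    _ ≤ ∑ g : Fin (t + 1) → α, ∑ z, μ (pathSet X t g) * P (g (Fin.last t)) z * V z := by
        gcongr with g _ z
        exact measure_pathSet_snoc_le hM t g z
    _ ≤ ∑ g : Fin (t + 1) → α, μ (pathSet X t g) * (ρ * V (g (Fin.last t))) := by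
        gcongr with g
        simp_rw [mul_assoc, ← mul_sum]
        gcongr
        exact hV _
    _ = ρ * pathPotential μ X V t := by
        rw [pathPotential, mul_sum]
        exact sum_congr rfl fun g _ => by ring

lemma measure_one_le_le_pathPotential (V : α → ℝ≥0∞) (T : ℕ) :
    μ {ω | 1 ≤ V (X T ω)} ≤ pathPotential μ X V T := by
  have hcover : {ω | 1 ≤ V (X T ω)}
      ⊆ ⋃ g ∈ univ.filter (fun g : Fin (T + 1) → α => 1 ≤ V (g (Fin.last T))), pathSet X T g :=
    fun ω hω => by
      simp only [Set.mem_iUnion, exists_prop, mem_filter, mem_univ, true_and]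
      exact ⟨fun u => X u ω, by simpa using hω, fun _ => rfl⟩
  calc μ {ω | 1 ≤ V (X T ω)}
      ≤ ∑ g ∈ univ.filter fun g : Fin (T + 1) → α => 1 ≤ V (g (Fin.last T)),
          μ (pathSet X T g) :=
        (measure_mono hcover).trans (measure_biUnion_finset_le _ _)
    _ ≤ ∑ g ∈ univ.filter fun g : Fin (T + 1) → α => 1 ≤ V (g (Fin.last T)),
          μ (pathSet X T g) * V (g (Fin.last T)) :=
        sum_le_sum fun g hg => le_mul_of_one_le_right' (mem_filter.1 hg).2
    _ ≤ pathPotential μ X V T := sum_le_sum_of_subset (subset_univ _)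

theorem measure_one_le_le_pow_mul [IsProbabilityMeasure μ] {P : α → α → ℝ≥0∞} {ρ : ℝ≥0∞}
    {V : α → ℝ≥0∞} {x₀ : α} (hX0 : ∀ ω, X 0 ω = x₀)
    (hM : HasTransition μ X P)
    (hV : ∀ x, ∑ z, P x z * V z ≤ ρ * V x) (T : ℕ) :
    μ {ω | 1 ≤ V (X T ω)} ≤ ρ ^ T * V x₀ := by
  refine (measure_one_le_le_pathPotential V T).trans ?_
  induction T with
  | zero => simpa using pathPotential_zero_le hX0 V
  | succ T ih =>
    calc pathPotential μ X V (T + 1) ≤ ρ * pathPotential μ X V T := pathPotential_succ_le hM hV T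
      _ ≤ ρ * (ρ ^ T * V x₀) := by gcongr
      _ = ρ ^ (T + 1) * V x₀ := by ring

end PathPotential

lemma Finset.sum_sum_ite_eq_mul {β γ M : Type*} [Fintype β] [Fintype γ] [DecidableEq γ]
    [NonUnitalNonAssocSemiring M] (g : β → γ) (p : β → M) (V : γ → M) :
    ∑ z, (∑ y, if g y = z then p y else 0) * V z = ∑ y, p y * V (g y) := by
  simp_rw [sum_mul, ite_mul, zero_mul]
  rw [sum_comm]
  simp

lemma Real.exp_neg_div_pow_ceil_mul_le {ε : ℝ} (hε : 0 < ε) {n : ℕ} (hn : 1 ≤ n) :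
    Real.exp (-(ε / n)) ^ ⌈2 / ε * n * Real.log n⌉₊ * n ≤ (n : ℝ)⁻¹ := by
  have hn0 : (0 : ℝ) < n := by exact_mod_cast hn
  have hT : 2 * Real.log n ≤ ⌈2 / ε * n * Real.log n⌉₊ * (ε / n) := by
    calc 2 * Real.log n = 2 / ε * n * Real.log n * (ε / n) := by field_simp
      _ ≤ ⌈2 / ε * n * Real.log n⌉₊ * (ε / n) := by gcongr; exact Nat.le_ceil _
  calc Real.exp (-(ε / n)) ^ ⌈2 / ε * n * Real.log n⌉₊ * n
      ≤ Real.exp (-(2 * Real.log n)) * Real.exp (Real.log n) := by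
        rw [← Real.exp_nat_mul, Real.exp_log hn0]
        gcongr
        linarith
    _ = (n : ℝ)⁻¹ := by
        rw [← Real.exp_add, show -(2 * Real.log n) + Real.log n = -Real.log n by ring,
          Real.exp_neg, Real.exp_log hn0]

lemma ENNReal.one_sub_ofReal_pow_ceil_mul_le {ε : ℝ} (hε : 0 < ε) {n : ℕ} (hn : 1 ≤ n) :
    (1 - ENNReal.ofReal (ε / n)) ^ ⌈2 / ε * n * Real.log n⌉₊ * n
      ≤ ENNReal.ofReal (n : ℝ)⁻¹ := by
  have hexp : 1 - ENNReal.ofReal (ε / n) ≤ ENNReal.ofReal (Real.exp (-(ε / n))) := by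
    rw [← ENNReal.ofReal_one, ← ENNReal.ofReal_sub _ (by positivity)]
    exact ENNReal.ofReal_le_ofReal (by linarith [Real.add_one_le_exp (-(ε / n))])
  calc (1 - ENNReal.ofReal (ε / n)) ^ ⌈2 / ε * n * Real.log n⌉₊ * n
      ≤ ENNReal.ofReal (Real.exp (-(ε / n))) ^ ⌈2 / ε * n * Real.log n⌉₊ * n := by gcongr
    _ = ENNReal.ofReal (Real.exp (-(ε / n)) ^ ⌈2 / ε * n * Real.log n⌉₊ * n) := by
        rw [ENNReal.ofReal_mul (by positivity), ENNReal.ofReal_pow (by positivity),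
          ENNReal.ofReal_natCast]
    _ ≤ ENNReal.ofReal (n : ℝ)⁻¹ :=
        ENNReal.ofReal_le_ofReal (Real.exp_neg_div_pow_ceil_mul_le hε hn)

lemma tendsto_measure_of_measure_compl_le {ι : Type*} {l : Filter ι} {Ω : ι → Type*}
    [∀ i, MeasurableSpace (Ω i)] {μ : ∀ i, Measure (Ω i)} [∀ i, IsProbabilityMeasure (μ i)]
    {s : ∀ i, Set (Ω i)} {v : ι → ℝ≥0∞} (hv : Tendsto v l (𝓝 0))
    (h : ∀ᶠ i in l, μ i (s i)ᶜ ≤ v i) : Tendsto (fun i => μ i (s i)) l (𝓝 1) := by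
  refine tendsto_of_tendsto_of_tendsto_of_le_of_le' (g := fun i => 1 - v i) ?_
    tendsto_const_nhds ?_ (Eventually.of_forall fun i => prob_le_one)
  · simpa using ENNReal.Tendsto.sub tendsto_const_nhds hv (Or.inl ENNReal.one_ne_top)
  · filter_upwards [h] with i hi
    rw [tsub_le_iff_right]
    calc 1 = μ i (s i ∪ (s i)ᶜ) := by rw [Set.union_compl_self, measure_univ]
      _ ≤ μ i (s i) + μ i (s i)ᶜ := measure_union_le _ _
      _ ≤ μ i (s i) + v i := by gcongr

/-- **Generic easiness proof.**  Suppose the offspring kernels `K` satisfy, for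
all `n` and all parents `x`: (1) `E[s₁₀ | s₀₁ > 0] ≤ 1 − δ` (stated in the
product form `E[s₁₀·1_{s₀₁>0}] ≤ (1−δ)·Pr[s₀₁ > 0]`), and
(2) `Pr[s₀₁ > 0] ≥ C·(n − OM(x))/n`.  Then there is a constant `C' > 0` such
that for every sequence of strictly monotone functions, the elitist
(accept iff `f y ≥ f x`) process started at an arbitrary point reaches the
all-ones string within `C'·n·ln n` rounds with probability tending to `1`. -/
theorem stmt4
    (δ C : ℝ) (hδ : 0 < δ) (hC : 0 < C)
    (K : ∀ n : ℕ, (Fin n → Bool) → PMF (Fin n → Bool))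
    (h1 : ∀ (n : ℕ) (x : Fin n → Bool),
      (∑ y : Fin n → Bool, if 0 < s01 x y then K n x y else 0) ≠ 0 →
      (∑ y : Fin n → Bool, if 0 < s01 x y then K n x y * (s10 x y : ℝ≥0∞) else 0)
        ≤ ENNReal.ofReal (1 - δ)
          * ∑ y : Fin n → Bool, if 0 < s01 x y then K n x y else 0)
    (h2 : ∀ (n : ℕ) (x : Fin n → Bool),
      ENNReal.ofReal (C * ((n : ℝ) - (onesCount x : ℝ)) / (n : ℝ))
        ≤ ∑ y : Fin n → Bool, if 0 < s01 x y then K n x y else 0) :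
    ∃ C' : ℝ, 0 < C' ∧
      ∀ (f : ∀ n : ℕ, (Fin n → Bool) → ℝ), (∀ n, StrictMonoBool (f n)) →
      ∀ (x0 : ∀ n : ℕ, Fin n → Bool),
      ∀ (Ω : ℕ → Type) [∀ n, MeasurableSpace (Ω n)] (μ : ∀ n, Measure (Ω n)),
        (∀ n, IsProbabilityMeasure (μ n)) →
      ∀ (X : ∀ n : ℕ, ℕ → Ω n → (Fin n → Bool)),
        (∀ n ω, X n 0 ω = x0 n) →
        (∀ (n t : ℕ) (h : ℕ → (Fin n → Bool)),
          μ n {ω | ∀ u ≤ t, X n u ω = h u} ≠ 0 →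
          ∀ z : Fin n → Bool,
            ((μ n)[|{ω | ∀ u ≤ t, X n u ω = h u}]) {ω | X n (t + 1) ω = z}
              = ∑ y : Fin n → Bool,
                  if (if f n (h t) ≤ f n y then y else h t) = z then K n (h t) y else 0) →
        Tendsto
          (fun n => μ n {ω | ∃ t ≤ ⌈C' * (n : ℝ) * Real.log (n : ℝ)⌉₊,
            X n t ω = fun _ => true})
          atTop (𝓝 (1 : ℝ≥0∞)) := by
  have hε : 0 < min δ 1 * C := mul_pos (lt_min hδ one_pos) hC
  refine ⟨2 / (min δ 1 * C), by positivity, ?_⟩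
  intro f hf x0 Ω _ μ hμ X hX0 hM
  refine tendsto_measure_of_measure_compl_le (μ := μ) (v := fun n => ENNReal.ofReal (n : ℝ)⁻¹)
    ?_ ?_
  · simpa using ENNReal.tendsto_ofReal (tendsto_inv_atTop_zero.comp tendsto_natCast_atTop_atTop)
  filter_upwards [eventually_ge_atTop 1] with n hn
  set T := ⌈2 / (min δ 1 * C) * n * Real.log n⌉₊
  have hchain : HasTransition (μ n) (X n)
      fun x z => ∑ y, if elitistStep (f n) x y = z then K n x y else 0 := hM n
  have hdrift (x : Fin n → Bool) :
      ∑ z, (∑ y, if elitistStep (f n) x y = z then K n x y else 0) * (zerosCount z : ℝ≥0∞)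
        ≤ (1 - ENNReal.ofReal (min δ 1 * C / n)) * zerosCount x := by
    rw [sum_sum_ite_eq_mul]
    exact sum_mul_zerosCount_elitistStep_le hδ.le (hf n) (K n x) x (h1 n x) (h2 n x)
  have hmiss : {ω | ∃ t ≤ T, X n t ω = fun _ => true}ᶜ
      ⊆ {ω | 1 ≤ (zerosCount (X n T ω) : ℝ≥0∞)} := fun ω hω =>
    (one_le_zerosCount_iff _).2 fun h => hω ⟨T, le_rfl, h⟩
  calc μ n {ω | ∃ t ≤ T, X n t ω = fun _ => true}ᶜ
      ≤ μ n {ω | 1 ≤ (zerosCount (X n T ω) : ℝ≥0∞)} := measure_mono hmiss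
    _ ≤ (1 - ENNReal.ofReal (min δ 1 * C / n)) ^ T * zerosCount (x0 n) :=
        measure_one_le_le_pow_mul (hX0 n) hchain hdrift T
    _ ≤ (1 - ENNReal.ofReal (min δ 1 * C / n)) ^ T * n := by
        gcongr; exact_mod_cast zerosCount_le _
    _ ≤ ENNReal.ofReal (n : ℝ)⁻¹ := ENNReal.one_sub_ofReal_pow_ceil_mul_le hε hn
end

section
/- For x ∈ (0, 1/4], define g₋(x) := (1 − √(1 − 4x))/(2x(1−x)) and h₋(x) := f(g₋(x), x), where f(c,x) := c·x − e^{−c(1−x)} − x/(1−x). Then: (i) h₋ is strictly increasing on (0, 1/4]; (ii) h₋(x) → −1/e as x → 0⁺; (iii) h₋(1/4) = 1/3 − e^{−2} > 0; and consequently (iv) h₋ has a unique zero α₀ in (0, 1/4). -/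
/-!
Substitute `s = √(1 - 4x) ∈ [0, 1)`, so that `x = (1 - s²)/4`. Then `g₋(x)(1 - x) = 2/(1 + s)` and
`h₋(x) = (1 - s)²/(3 + s²) - e^{-2/(1+s)}`, a strictly decreasing function of `s` on `[0, 1]`;
as `s` decreases with `x`, `h₋` increases. The values at `s = 1` and `s = 0` give the limit `-1/e`
and `h₋(1/4) = 1/3 - e^{-2}`, which is positive because `e² > 1 + 2`. The zero then comes from
the intermediate value theorem, and is unique by monotonicity.
-/

/-- `f(c,x) := c·x − e^{−c(1−x)} − x/(1−x)`. -/
noncomputable def fcx (c x : ℝ) : ℝ := c * x - Real.exp (-(c * (1 - x))) - x / (1 - x)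

/-- `g₋(x) := (1 − √(1 − 4x))/(2x(1−x))`. -/
noncomputable def gminus (x : ℝ) : ℝ := (1 - Real.sqrt (1 - 4 * x)) / (2 * x * (1 - x))

/-- `h₋(x) := f(g₋(x), x)`. -/
noncomputable def hminus (x : ℝ) : ℝ := fcx (gminus x) x

open Real Set Filter Topology

theorem existsUnique_zero_of_strictMonoOn_Ioc {α : Type*} [ConditionallyCompleteLinearOrder α]
    [TopologicalSpace α] [OrderTopology α] [DenselyOrdered α] {f : α → ℝ} {a b : α} (hab : a < b)
    (hf : StrictMonoOn f (Ioc a b)) (hfc : ContinuousOn f (Ioc a b))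
    (ha : ∀ᶠ x in 𝓝[>] a, f x < 0) (hb : 0 < f b) :
    ∃! x, x ∈ Ioo a b ∧ f x = 0 := by
  have := nhdsGT_neBot_of_exists_gt ⟨b, hab⟩
  obtain ⟨c, hc, hfc_neg⟩ := (Filter.Eventually.and (Ioo_mem_nhdsGT hab) ha).exists
  obtain ⟨x, hx, hfx⟩ := intermediate_value_Ioo hc.2.le (hfc.mono (Icc_subset_Ioc_left hc.1))
    ⟨hfc_neg, hb⟩
  refine ⟨x, ⟨⟨hc.1.trans hx.1, hx.2⟩, hfx⟩, fun y ⟨hy, hfy⟩ => ?_⟩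
  exact hf.injOn ⟨hy.1, hy.2.le⟩ ⟨hc.1.trans hx.1, hx.2.le⟩ (hfy.trans hfx.symm)

lemma exp_neg_two_lt_one_third : exp (-2) < 1 / 3 := by
  rw [exp_neg, ← one_div]
  gcongr
  linarith [add_one_lt_exp (two_ne_zero (α := ℝ))]

noncomputable def hminusOfSqrt (s : ℝ) : ℝ := (1 - s) ^ 2 / (3 + s ^ 2) - exp (-(2 / (1 + s)))

lemma strictAntiOn_hminusOfSqrt : StrictAntiOn hminusOfSqrt (Icc 0 1) := by
  intro a ⟨ha₀, ha₁⟩ b ⟨_, hb₁⟩ hab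
  have hrat : (1 - b) ^ 2 / (3 + b ^ 2) < (1 - a) ^ 2 / (3 + a ^ 2) := by
    rw [div_lt_div_iff₀ (by positivity) (by positivity), ← sub_pos]
    have : 0 < 3 - a - b - a * b := by nlinarith
    calc (0 : ℝ) < 2 * (b - a) * (3 - a - b - a * b) := by have := sub_pos.2 hab; positivity
      _ = _ := by ring
  have hexp : exp (-(2 / (1 + a))) < exp (-(2 / (1 + b))) := by gcongr
  unfold hminusOfSqrt
  linarith

lemma continuousOn_hminusOfSqrt : ContinuousOn hminusOfSqrt (Ici 0) := by
  intro s (hs : 0 ≤ s)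
  have : 1 + s ≠ 0 := by positivity
  unfold hminusOfSqrt
  fun_prop (disch := positivity)

lemma hminus_eq_hminusOfSqrt {x : ℝ} (hx₀ : 0 < x) (hx₁ : x ≤ 1 / 4) :
    hminus x = hminusOfSqrt (√(1 - 4 * x)) := by
  rw [hminus, gminus]
  set s := √(1 - 4 * x)
  have hs : s ^ 2 = 1 - 4 * x := sq_sqrt (by linarith)
  have hs₀ : 0 ≤ s := sqrt_nonneg _
  have hs₁ : 1 - s ≠ 0 := by nlinarith
  have hs₂ : 1 + s ≠ 0 := by positivity
  have hs₃ : 3 + s ^ 2 ≠ 0 := by positivity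
  clear_value s
  obtain rfl : x = (1 - s) * (1 + s) / 4 := by linear_combination hs / 4
  rw [fcx, show 1 - (1 - s) * (1 + s) / 4 = (3 + s ^ 2) / 4 by ring]
  have hexp : (1 - s) / (2 * ((1 - s) * (1 + s) / 4) * ((3 + s ^ 2) / 4)) * ((3 + s ^ 2) / 4) =
      2 / (1 + s) := by
    field_simp
    norm_num
  rw [sub_right_comm, hexp, hminusOfSqrt]
  field_simp
  ring

lemma sqrt_one_sub_four_mul_mem_Icc {x : ℝ} (hx : x ∈ Ioc (0 : ℝ) (1 / 4)) :
    √(1 - 4 * x) ∈ Icc 0 1 :=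
  ⟨sqrt_nonneg _, sqrt_le_one.mpr (by linarith [hx.1])⟩

lemma strictMonoOn_hminus : StrictMonoOn hminus (Ioc 0 (1 / 4)) := by
  intro x hx y hy hxy
  rw [hminus_eq_hminusOfSqrt hx.1 hx.2, hminus_eq_hminusOfSqrt hy.1 hy.2]
  exact strictAntiOn_hminusOfSqrt (sqrt_one_sub_four_mul_mem_Icc hy)
    (sqrt_one_sub_four_mul_mem_Icc hx) (sqrt_lt_sqrt (by linarith [hy.2]) (by linarith))

lemma continuousOn_hminus : ContinuousOn hminus (Ioc 0 (1 / 4)) := by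
  refine ContinuousOn.congr ?_ fun x hx => hminus_eq_hminusOfSqrt hx.1 hx.2
  exact continuousOn_hminusOfSqrt.comp (by fun_prop) fun x hx =>
    (sqrt_one_sub_four_mul_mem_Icc hx).1

lemma tendsto_hminus_nhdsGT_zero : Tendsto hminus (𝓝[>] 0) (𝓝 (-(1 / exp 1))) := by
  have hlim : hminusOfSqrt 1 = -(1 / exp 1) := by
    norm_num [hminusOfSqrt, exp_neg]
  have hsqrt : Tendsto (fun x : ℝ => √(1 - 4 * x)) (𝓝[>] 0) (𝓝[Ici 0] 1) := by
    refine tendsto_nhdsWithin_iff.2 ⟨?_, .of_forall fun x => sqrt_nonneg _⟩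
    exact ((Continuous.tendsto' (by fun_prop) 0 1 (by norm_num)).mono_left nhdsWithin_le_nhds)
  rw [← hlim]
  refine ((continuousOn_hminusOfSqrt 1 (by norm_num)).tendsto.comp hsqrt).congr' ?_
  filter_upwards [Ioo_mem_nhdsGT (show (0 : ℝ) < 1 / 4 by norm_num)] with x hx
  exact (hminus_eq_hminusOfSqrt hx.1 hx.2.le).symm

lemma hminus_one_fourth : hminus (1 / 4) = 1 / 3 - exp (-2) := by
  rw [hminus_eq_hminusOfSqrt (by norm_num) le_rfl]
  norm_num [hminusOfSqrt]

/-- (i) `h₋` is strictly increasing on `(0, 1/4]`; (ii) `h₋(x) → −1/e` as `x → 0⁺`;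
(iii) `h₋(1/4) = 1/3 − e^{−2} > 0`; (iv) `h₋` has a unique zero `α₀` in `(0, 1/4)`. -/
theorem stmt14 :
    StrictMonoOn hminus (Set.Ioc (0 : ℝ) (1 / 4)) ∧
    Filter.Tendsto hminus (nhdsWithin 0 (Set.Ioi 0)) (nhds (-(1 / Real.exp 1))) ∧
    (hminus (1 / 4) = 1 / 3 - Real.exp (-2) ∧ 0 < (1 : ℝ) / 3 - Real.exp (-2)) ∧
    (∃! α₀ : ℝ, α₀ ∈ Set.Ioo (0 : ℝ) (1 / 4) ∧ hminus α₀ = 0) := by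
  have hpos : 0 < (1 : ℝ) / 3 - exp (-2) := sub_pos.2 exp_neg_two_lt_one_third
  refine ⟨strictMonoOn_hminus, tendsto_hminus_nhdsGT_zero, ⟨hminus_one_fourth, hpos⟩, ?_⟩
  refine existsUnique_zero_of_strictMonoOn_Ioc (by norm_num) strictMonoOn_hminus
    continuousOn_hminus ?_ (hminus_one_fourth ▸ hpos)
  exact tendsto_hminus_nhdsGT_zero.eventually_lt_const (by simp [exp_pos])
end

section
/- Let s be a random variable taking values in the nonnegative integers with first and second falling moments m₁ := E[s] and m₂ := E[s(s−1)], and suppose m₂ ≤ m₁ < ∞. Then 2·Pr[1 ≤ s ≤ 2] ≥ m₁ − m₂/2 ≥ m₁/2; in particular Pr[1 ≤ s ≤ 2] ≥ m₁/4 and m₁ ≤ 4. -/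
/-! Since k − k(k−1)/2 = k(3−k)/2 is 1 for k ∈ {1, 2}, 0 for k = 0 and negative for k ≥ 3,
taking expectations gives m₁ − m₂/2 ≤ Pr[1 ≤ s ≤ 2] ≤ 1;
combined with m₂ ≤ m₁ this yields all four bounds. -/

theorem natCast_sub_choose_two_le_indicator (k : ℕ) :
    (k : ℝ) - k * (k - 1) / 2 ≤ (({1, 2} : Finset ℕ) : Set ℕ).indicator 1 k := by
  match k with
  | 0 | 1 | 2 => norm_num
  | n + 3 =>
    rw [Set.indicator_of_notMem (by simp)]
    have hn : (0 : ℝ) ≤ n := n.cast_nonneg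
    push_cast
    nlinarith

theorem tsum_mul_sub_half_tsum_mul_le {p : ℕ → ℝ} (hp : ∀ k, 0 ≤ p k)
    (hs1 : Summable fun k : ℕ => p k * k)
    (hs2 : Summable fun k : ℕ => p k * (k * (k - 1))) :
    ∑' k : ℕ, p k * k - (∑' k : ℕ, p k * (k * (k - 1))) / 2 ≤ p 1 + p 2 := by
  set s : Finset ℕ := {1, 2}
  have hs : ∀ k ∉ s, (s : Set ℕ).indicator p k = 0 := fun k hk => Set.indicator_of_notMem hk p
  calc ∑' k : ℕ, p k * k - (∑' k : ℕ, p k * (k * (k - 1))) / 2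
      = ∑' k : ℕ, p k * (k - k * (k - 1) / 2) := by
        rw [← tsum_div_const, ← (hs1.tsum_sub (hs2.div_const 2))]
        congr 1 with k
        ring
    _ ≤ ∑' k : ℕ, (s : Set ℕ).indicator p k := by
        refine Summable.tsum_le_tsum (fun k => ?_) ?_ (summable_of_ne_finset_zero hs)
        · calc p k * (k - k * (k - 1) / 2) ≤ p k * (s : Set ℕ).indicator 1 k :=
                mul_le_mul_of_nonneg_left (natCast_sub_choose_two_le_indicator k) (hp k)
            _ = (s : Set ℕ).indicator p k := by simp [Set.indicator_apply]
        · exact (hs1.sub (hs2.div_const 2)).congr fun k => by ring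
    _ = p 1 + p 2 := by
        rw [tsum_eq_sum hs]
        simp [s]

/-- For a random variable `s` on ℕ with distribution `p` and falling moments
`m₁ = E[s]`, `m₂ = E[s(s−1)]` satisfying `m₂ ≤ m₁ < ∞`:
`2·Pr[1 ≤ s ≤ 2] ≥ m₁ − m₂/2 ≥ m₁/2`; in particular `Pr[1 ≤ s ≤ 2] ≥ m₁/4`
and `m₁ ≤ 4`. Note `Pr[1 ≤ s ≤ 2] = p 1 + p 2`. -/
theorem stmt17 (p : ℕ → ℝ) (hp : ∀ k, 0 ≤ p k) (hpsum : Summable p)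
    (hsum : ∑' k : ℕ, p k = 1)
    (hs1 : Summable fun k : ℕ => p k * (k : ℝ))
    (hs2 : Summable fun k : ℕ => p k * ((k : ℝ) * ((k : ℝ) - 1)))
    (hm : (∑' k : ℕ, p k * ((k : ℝ) * ((k : ℝ) - 1))) ≤ ∑' k : ℕ, p k * (k : ℝ)) :
    (∑' k : ℕ, p k * (k : ℝ)) - (∑' k : ℕ, p k * ((k : ℝ) * ((k : ℝ) - 1))) / 2
        ≤ 2 * (p 1 + p 2) ∧
      (∑' k : ℕ, p k * (k : ℝ)) / 2
        ≤ (∑' k : ℕ, p k * (k : ℝ)) - (∑' k : ℕ, p k * ((k : ℝ) * ((k : ℝ) - 1))) / 2 ∧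
      (∑' k : ℕ, p k * (k : ℝ)) / 4 ≤ p 1 + p 2 ∧
      (∑' k : ℕ, p k * (k : ℝ)) ≤ 4 := by
  have hmoment := tsum_mul_sub_half_tsum_mul_le hp hs1 hs2
  have hprob : p 1 + p 2 ≤ 1 := by
    simpa [hsum] using hpsum.sum_le_tsum {1, 2} fun k _ => hp k
  have hprob_nonneg : 0 ≤ p 1 + p 2 := add_nonneg (hp 1) (hp 2)
  exact ⟨by linarith, by linarith, by linarith, by linarith⟩
end

section
/- Let n ≥ 1 and let Z ⊆ [n] be a nonempty set with |Z| = k. For 1 ≤ s ≤ n, let P(s) denote the probability that a uniformly random s-element subset of [n] intersects Z, i.e. P(s) = 1 − C(n−k, s)/C(n, s), where C(m, j) denotes the binomial coefficient (with C(m, j) = 0 for j > m). Then the sequence P(s)/s is non-increasing in s: for all 1 ≤ s < n, P(s+1)/(s+1) ≤ P(s)/s. -/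
/-!
Write `q(s) = C(m, s) / C(n, s)` with `m = n - |Z| < n`, so `P = 1 - q`. From
`C(m, s+1) (s+1) = C(m, s) (m - s)` one gets `q(s+1) = q(s) (m - s)/(n - s)`, hence the increment
`P(s+1) - P(s) = q(s) (n - m)/(n - s)`, and the next increment is smaller because `m - s ≤ n - s - 1`.
So `P` is concave on `{0, …, n}` with `P(0) = 0`, and a concave sequence vanishing at `0` has
`P(s)/s` non-increasing.
-/

theorem mul_apply_succ_le_of_sub_antitone {R : Type*} [CommRing R] [LinearOrder R]
    [IsStrictOrderedRing R] {f : ℕ → R} (h0 : f 0 = 0) :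
    ∀ s : ℕ, (∀ i < s, f (i + 2) - f (i + 1) ≤ f (i + 1) - f i) → s * f (s + 1) ≤ (s + 1) * f s
  | 0, _ => by simp [h0]
  | s + 1, hf => by
    have ih := mul_apply_succ_le_of_sub_antitone h0 s fun i hi ↦ hf i (by omega)
    have hs := hf s (by omega)
    push_cast
    linear_combination ih + (s + 1 : R) * hs

theorem Nat.cast_choose_succ_mul {R : Type*} [CommRing R] (m s : ℕ) :
    (m.choose (s + 1) : R) * (s + 1) = m.choose s * (m - s) := by
  rcases le_or_gt s m with hsm | hms
  · rw [← Nat.cast_sub hsm]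
    exact_mod_cast congrArg (Nat.cast : ℕ → R) (Nat.choose_succ_right_eq m s)
  · simp [Nat.choose_eq_zero_of_lt hms, Nat.choose_eq_zero_of_lt (hms.trans s.lt_succ_self)]

/-- The probability that a uniformly random `s`-subset of an `n`-set avoids a fixed set of
`n - m` of its elements. -/
noncomputable def missProb (n m s : ℕ) : ℝ := m.choose s / n.choose s

theorem missProb_succ {n m s : ℕ} (hs : s < n) :
    missProb n m (s + 1) = missProb n m s * (m - s) / (n - s) := by
  have hn : (n.choose s : ℝ) ≠ 0 := by exact_mod_cast (Nat.choose_pos hs.le).ne'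
  have hns : (n - s : ℝ) ≠ 0 := by rw [sub_ne_zero]; exact_mod_cast hs.ne'
  have hs1 : (s + 1 : ℝ) ≠ 0 := by positivity
  unfold missProb
  rw [← mul_div_cancel_right₀ (m.choose (s + 1) : ℝ) hs1,
    ← mul_div_cancel_right₀ (n.choose (s + 1) : ℝ) hs1,
    Nat.cast_choose_succ_mul, Nat.cast_choose_succ_mul]
  field_simp

theorem missProb_sub_succ {n m s : ℕ} (hs : s < n) :
    missProb n m s - missProb n m (s + 1) = missProb n m s * (n - m) / (n - s) := by
  have hns : (n - s : ℝ) ≠ 0 := by rw [sub_ne_zero]; exact_mod_cast hs.ne'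
  rw [missProb_succ hs]
  field_simp
  ring

theorem missProb_succ_div_le {n m s : ℕ} (hm : m < n) (hs : s + 1 < n) :
    missProb n m (s + 1) / (n - (s + 1 : ℕ)) ≤ missProb n m s / (n - s) := by
  have hns : (0 : ℝ) < n - (s + 1) := by rw [sub_pos]; exact_mod_cast hs
  have hmn : (m : ℝ) - s ≤ n - (s + 1) := by
    have : (m : ℝ) + 1 ≤ n := by exact_mod_cast hm
    linarith
  have hq : 0 ≤ missProb n m s * (n - s) :=
    mul_nonneg (by unfold missProb; positivity) (by linarith)
  rw [missProb_succ (by omega : s < n), div_div, Nat.cast_succ,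
    div_le_div_iff₀ (by nlinarith) (by linarith)]
  nlinarith [mul_le_mul_of_nonneg_left hmn hq]

theorem missProb_sub_succ_antitone {n m s : ℕ} (hm : m < n) (hs : s + 1 < n) :
    missProb n m (s + 1) - missProb n m (s + 2) ≤ missProb n m s - missProb n m (s + 1) := by
  have hmn : (0 : ℝ) ≤ n - m := by rw [sub_nonneg]; exact_mod_cast hm.le
  rw [missProb_sub_succ hs, missProb_sub_succ (by omega : s < n), mul_div_right_comm,
    mul_div_right_comm (missProb n m s)]
  exact mul_le_mul_of_nonneg_right (missProb_succ_div_le hm hs) hmn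

theorem stmt18_general (n : ℕ) (Z : Finset (Fin n)) (hZ : Z.Nonempty) :
    ∀ s : ℕ, 1 ≤ s → s < n →
      (1 - (((n - Z.card).choose (s + 1) : ℝ)) / ((n.choose (s + 1) : ℝ))) / ((s : ℝ) + 1)
        ≤ (1 - (((n - Z.card).choose s : ℝ)) / ((n.choose s : ℝ))) / (s : ℝ) := by
  intro s hs hsn
  have hm : n - Z.card < n := by
    have := Z.card_le_univ
    have := hZ.card_pos
    simp only [Fintype.card_fin] at *
    omega
  have key := mul_apply_succ_le_of_sub_antitone (f := fun s ↦ 1 - missProb n (n - Z.card) s)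
    (by simp [missProb]) s fun i hi ↦ by
      have := missProb_sub_succ_antitone hm (by omega : i + 1 < n)
      linarith
  rw [div_le_div_iff₀ (by positivity) (by positivity)]
  simpa only [missProb, mul_comm] using key

/-- Let `Z ⊆ [n]` be nonempty of size `k`, and let
`P(s) = 1 − C(n−k, s)/C(n, s)` be the probability that a uniformly random
`s`-element subset of `[n]` intersects `Z`.  Then `P(s)/s` is non-increasing:
for all `1 ≤ s < n`, `P(s+1)/(s+1) ≤ P(s)/s`. -/
theorem stmt18 (n : ℕ) (hn : 1 ≤ n) (Z : Finset (Fin n)) (hZ : Z.Nonempty) :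
    ∀ s : ℕ, 1 ≤ s → s < n →
      (1 - (((n - Z.card).choose (s + 1) : ℝ)) / ((n.choose (s + 1) : ℝ))) / ((s : ℝ) + 1)
        ≤ (1 - (((n - Z.card).choose s : ℝ)) / ((n.choose s : ℝ))) / (s : ℝ) :=
  stmt18_general n Z hZ
end

section
/- Let n ≥ 1, let Z ⊆ [n] be a nonempty set of 'zero positions', and let 𝒟 be a probability distribution on {0, 1, …, n} with m₁ := E[s] > 0 and m₂ := E[s(s−1)] < ∞ for s ~ 𝒟. Draw s ~ 𝒟 and then, conditionally on s, a uniformly random s-element subset S of [n]; let s₀₁ := |S ∩ Z| and s₁₀ := s − s₀₁. If Pr[s₀₁ > 0] > 0, then E[s₁₀ | s₀₁ > 0] ≤ m₂/m₁. -/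
/-!
Let `P(s)` be the probability that a uniform `s`-subset of `[n]` meets `Z`. Then
`Pr[s₀₁ > 0] = E[P(s)]`, and since `s₁₀ ≤ s - 1` whenever `s₀₁ > 0`, the numerator is at most
`E[(s - 1) P(s)]`. A truncated Vandermonde bound shows that `P(s) / s` is nonincreasing, so the
weighted Chebyshev sum inequality for the increasing `s - 1` and the decreasing `P(s) / s`, with
weights `Pr[s] · s`, gives `m₁ · E[(s - 1) P(s)] ≤ m₂ · E[P(s)]`.
-/

open Finset

theorem AntivaryOn.sum_mul_sum_mul_le {ι : Type*} {s : Finset ι} {w f g : ι → ℝ}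
    (hw : ∀ i ∈ s, 0 ≤ w i) (hfg : AntivaryOn f g s) :
    (∑ i ∈ s, w i) * ∑ i ∈ s, w i * f i * g i ≤
      (∑ i ∈ s, w i * f i) * ∑ i ∈ s, w i * g i := by
  have hpairs : 0 ≤ ∑ i ∈ s, ∑ j ∈ s, w i * w j * -((f j - f i) * (g j - g i)) :=
    sum_nonneg fun i hi => sum_nonneg fun j hj =>
      mul_nonneg (mul_nonneg (hw i hi) (hw j hj)) (neg_nonneg.2 (hfg.sub_mul_sub_nonpos hi hj))
  have hexpand : ∑ i ∈ s, ∑ j ∈ s, w i * w j * -((f j - f i) * (g j - g i)) =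
      ∑ i ∈ s, ∑ j ∈ s, (w i * f i * (w j * g j) + w j * f j * (w i * g i)
        - w i * (w j * f j * g j) - w j * (w i * f i * g i)) :=
    sum_congr rfl fun i _ => sum_congr rfl fun j _ => by ring
  simp only [hexpand, sum_add_distrib, sum_sub_distrib, ← mul_sum, ← sum_mul] at hpairs
  linarith

theorem Finset.sum_range_succ_eq_sum_Icc_one {M : Type*} [AddCommMonoid M] {f : ℕ → M}
    (h0 : f 0 = 0) (n : ℕ) : ∑ i ∈ range (n + 1), f i = ∑ i ∈ Icc 1 n, f i := by
  rw [sum_range_eq_add_Ico _ (Nat.add_one_pos n), h0, zero_add, Ico_add_one_right_eq_Icc]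

-- The left side counts the `(t + 1)`-subsets of `[n]` meeting a `z`-set in at most one point.
theorem Nat.choose_sub_succ_add_mul_choose_sub_le {n z : ℕ} (hz : z ≤ n) (t : ℕ) :
    (n - z).choose (t + 1) + z * (n - z).choose t ≤ n.choose (t + 1) := by
  have hpairs : {(0, t + 1), (1, t)} ⊆ antidiagonal (t + 1) := by
    simp [insert_subset_iff, add_comm]
  calc (n - z).choose (t + 1) + z * (n - z).choose t
      = ∑ ij ∈ {(0, t + 1), (1, t)}, z.choose ij.1 * (n - z).choose ij.2 := by simp
    _ ≤ ∑ ij ∈ antidiagonal (t + 1), z.choose ij.1 * (n - z).choose ij.2 :=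
      sum_le_sum_of_subset hpairs
    _ = n.choose (t + 1) := by rw [← Nat.add_choose_eq, Nat.add_sub_cancel' hz]

theorem Nat.choose_sub_mul_sub_le {n z : ℕ} (hz : z ≤ n) (t : ℕ) :
    (n - z).choose t * (n - t) ≤ n.choose (t + 1) + t * (n - z).choose (t + 1) :=
  calc (n - z).choose t * (n - t) ≤ (n - z).choose t * (n - z - t + z) :=
        Nat.mul_le_mul_left _ (by omega)
    _ = t * (n - z).choose (t + 1) + ((n - z).choose (t + 1) + z * (n - z).choose t) := by
        rw [mul_add, ← Nat.choose_succ_right_eq]; ring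
    _ ≤ t * (n - z).choose (t + 1) + n.choose (t + 1) := by
        gcongr; exact Nat.choose_sub_succ_add_mul_choose_sub_le hz t
    _ = _ := add_comm _ _

/-- The probability that a uniform `t`-subset of an `n`-set meets a fixed `z`-subset. -/
noncomputable def hitProb (n z t : ℕ) : ℝ := 1 - ((n - z).choose t : ℝ) / n.choose t

@[simp] theorem hitProb_zero (n z : ℕ) : hitProb n z 0 = 0 := by simp [hitProb]

theorem hitProb_succ_div_le {n z t : ℕ} (hz : z ≤ n) (ht : 1 ≤ t) (htn : t + 1 ≤ n) :
    hitProb n z (t + 1) / (t + 1 : ℕ) ≤ hitProb n z t / t := by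
  have ha : (0 : ℝ) < n.choose t := by exact_mod_cast Nat.choose_pos (by omega)
  have hA : (0 : ℝ) < n.choose (t + 1) := by exact_mod_cast Nat.choose_pos htn
  have hpascal : (n.choose (t + 1) : ℝ) * (t + 1) = n.choose t * (n - t) := by
    rw [← Nat.cast_sub (by omega : t ≤ n)]
    exact_mod_cast Nat.choose_succ_right_eq n t
  have hkey :
      ((n - z).choose t : ℝ) * (n - t) ≤ n.choose (t + 1) + t * (n - z).choose (t + 1) := by
    rw [← Nat.cast_sub (by omega : t ≤ n)]
    exact_mod_cast Nat.choose_sub_mul_sub_le hz t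
  rw [hitProb, hitProb, div_le_div_iff₀ (by positivity) (by positivity)]
  field_simp
  push_cast
  nlinarith [mul_le_mul_of_nonneg_left hkey ha.le, congrArg (· * ((n - z).choose t : ℝ)) hpascal]

theorem antitoneOn_hitProb_div {n z : ℕ} (hz : z ≤ n) :
    AntitoneOn (fun t : ℕ => hitProb n z t / t) (Set.Icc 1 n) :=
  antitoneOn_of_add_one_le Set.ordConnected_Icc fun _ _ ht ht' =>
    hitProb_succ_div_le hz ht.1 ht'.2

section Counting

variable {α : Type*} [Fintype α] [DecidableEq α]

theorem card_powersetCard_filter_inter_pos (Z : Finset α) (s : ℕ) :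
    #{S ∈ powersetCard s univ | 0 < #(S ∩ Z)} =
      (Fintype.card α).choose s - (Fintype.card α - #Z).choose s := by
  have hmiss : {S ∈ powersetCard s (univ : Finset α) | ¬ 0 < #(S ∩ Z)} = powersetCard s Zᶜ := by
    ext S
    simp [mem_powersetCard, subset_compl_iff_disjoint_right, disjoint_iff_inter_eq_empty, and_comm]
  have hsplit := card_filter_add_card_filter_not (s := powersetCard s (univ : Finset α))
    (fun S => 0 < #(S ∩ Z))
  rw [hmiss, card_powersetCard, card_powersetCard, card_compl, card_univ] at hsplit
  omega

theorem card_powersetCard_filter_inter_pos_eq_mul_hitProb (Z : Finset α) {s : ℕ}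
    (hs : s ≤ Fintype.card α) :
    (#{S ∈ powersetCard s univ | 0 < #(S ∩ Z)} : ℝ) =
      (Fintype.card α).choose s * hitProb (Fintype.card α) #Z s := by
  have hpos : ((Fintype.card α).choose s : ℝ) ≠ 0 := by
    exact_mod_cast (Nat.choose_pos hs).ne'
  rw [card_powersetCard_filter_inter_pos, Nat.cast_sub (Nat.choose_le_choose _ (Nat.sub_le _ _)),
    hitProb, mul_sub, mul_div_cancel₀ _ hpos, mul_one]

theorem sum_powersetCard_ite_inter_pos_le (Z : Finset α) {s : ℕ} (hs : s ≤ Fintype.card α) :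
    ∑ S ∈ powersetCard s univ, (if 0 < #(S ∩ Z) then (s : ℝ) - #(S ∩ Z) else 0) ≤
      ((s : ℝ) - 1) * ((Fintype.card α).choose s * hitProb (Fintype.card α) #Z s) := by
  rw [← card_powersetCard_filter_inter_pos_eq_mul_hitProb Z hs, card_filter, Nat.cast_sum,
    mul_sum]
  refine sum_le_sum fun S _ => ?_
  split_ifs with h
  · have : (1 : ℝ) ≤ #(S ∩ Z) := by exact_mod_cast h
    push_cast
    linarith
  · simp

end Counting

theorem sum_mul_sum_mul_hitProb_le {n z : ℕ} (hz : z ≤ n) {p : ℕ → ℝ} (hp : ∀ s, 0 ≤ p s) :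
    (∑ s ∈ range (n + 1), p s * s) * ∑ s ∈ range (n + 1), p s * ((s - 1) * hitProb n z s) ≤
      (∑ s ∈ range (n + 1), p s * (s * (s - 1))) * ∑ s ∈ range (n + 1), p s * hitProb n z s := by
  have hanti :
      AntivaryOn (fun s : ℕ => (s : ℝ) - 1) (fun s => hitProb n z s / s) ↑(Icc 1 n) := by
    rw [coe_Icc]
    exact MonotoneOn.antivaryOn (fun _ _ _ _ hab => by simpa using hab)
      (antitoneOn_hitProb_div hz)
  have h := hanti.sum_mul_sum_mul_le (w := fun s => p s * s) fun s _ =>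
    mul_nonneg (hp s) s.cast_nonneg
  rw [sum_range_succ_eq_sum_Icc_one, sum_range_succ_eq_sum_Icc_one, sum_range_succ_eq_sum_Icc_one,
    sum_range_succ_eq_sum_Icc_one]
  · have hs0 : ∀ s ∈ Icc 1 n, (s : ℝ) ≠ 0 := fun s hs => by
      have := (mem_Icc.1 hs).1; positivity
    convert h using 2 <;> refine sum_congr rfl fun s hs => ?_ <;> field_simp [hs0 s hs]
  all_goals simp

theorem stmt19_general (n : ℕ) (Z : Finset (Fin n))
    (p : ℕ → ℝ) (hp : ∀ s, 0 ≤ p s)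
    (hm1 : 0 < ∑ s ∈ Finset.range (n + 1), p s * (s : ℝ)) :
    let m1 : ℝ := ∑ s ∈ Finset.range (n + 1), p s * (s : ℝ)
    let m2 : ℝ := ∑ s ∈ Finset.range (n + 1), p s * ((s : ℝ) * ((s : ℝ) - 1))
    let num : ℝ := ∑ s ∈ Finset.range (n + 1),
      ∑ S ∈ Finset.powersetCard s (Finset.univ : Finset (Fin n)),
        (p s / (n.choose s : ℝ)) *
          (if 0 < (S ∩ Z).card then (s : ℝ) - ((S ∩ Z).card : ℝ) else 0)
    let den : ℝ := ∑ s ∈ Finset.range (n + 1),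
      ∑ S ∈ Finset.powersetCard s (Finset.univ : Finset (Fin n)),
        (p s / (n.choose s : ℝ)) * (if 0 < (S ∩ Z).card then 1 else 0)
    0 < den → num / den ≤ m2 / m1 := by
  intro m1 m2 num den hden
  have hchoose : ∀ s ∈ range (n + 1), (n.choose s : ℝ) ≠ 0 := fun s hs =>
    Nat.cast_ne_zero.2 (Nat.choose_pos (Nat.lt_succ_iff.1 (mem_range.1 hs))).ne'
  have hden_eq : den = ∑ s ∈ range (n + 1), p s * hitProb n #Z s := by
    refine sum_congr rfl fun s hs => ?_
    have h := card_powersetCard_filter_inter_pos_eq_mul_hitProb Z (s := s)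
      (by simpa [Nat.lt_succ_iff] using hs)
    rw [Fintype.card_fin] at h
    rw [← mul_sum, sum_boole, h]
    field_simp [hchoose s hs]
  have hnum_le : num ≤ ∑ s ∈ range (n + 1), p s * ((s - 1) * hitProb n #Z s) := by
    refine sum_le_sum fun s hs => ?_
    have h := sum_powersetCard_ite_inter_pos_le Z (s := s) (by simpa [Nat.lt_succ_iff] using hs)
    rw [Fintype.card_fin] at h
    rw [← mul_sum]
    calc _ ≤ p s / n.choose s * (((s : ℝ) - 1) * (n.choose s * hitProb n #Z s)) :=
          mul_le_mul_of_nonneg_left h (div_nonneg (hp s) (Nat.cast_nonneg _))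
      _ = _ := by field_simp [hchoose s hs]
  rw [div_le_div_iff₀ hden hm1]
  calc num * m1 ≤ (∑ s ∈ range (n + 1), p s * ((s - 1) * hitProb n #Z s)) * m1 :=
        mul_le_mul_of_nonneg_right hnum_le hm1.le
    _ ≤ m2 * den := by
        rw [hden_eq, mul_comm]
        exact sum_mul_sum_mul_hitProb_le (by simpa using card_le_univ Z) hp

/-- Let `Z ⊆ [n]` be a nonempty set of zero positions and `𝒟` (given by `p`) a
distribution on `{0, …, n}` with `m₁ = E[s] > 0`.  Draw `s ~ 𝒟` and then a
uniformly random `s`-element subset `S` of `[n]`; let `s₀₁ = |S ∩ Z|` and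
`s₁₀ = s − s₀₁`.  If `Pr[s₀₁ > 0] > 0` then `E[s₁₀ | s₀₁ > 0] ≤ m₂/m₁`. -/
theorem stmt19 (n : ℕ) (hn : 1 ≤ n) (Z : Finset (Fin n)) (hZ : Z.Nonempty)
    (p : ℕ → ℝ) (hp : ∀ s, 0 ≤ p s)
    (hpsum : ∑ s ∈ Finset.range (n + 1), p s = 1)
    (hm1 : 0 < ∑ s ∈ Finset.range (n + 1), p s * (s : ℝ)) :
    let m1 : ℝ := ∑ s ∈ Finset.range (n + 1), p s * (s : ℝ)
    let m2 : ℝ := ∑ s ∈ Finset.range (n + 1), p s * ((s : ℝ) * ((s : ℝ) - 1))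
    let num : ℝ := ∑ s ∈ Finset.range (n + 1),
      ∑ S ∈ Finset.powersetCard s (Finset.univ : Finset (Fin n)),
        (p s / (n.choose s : ℝ)) *
          (if 0 < (S ∩ Z).card then (s : ℝ) - ((S ∩ Z).card : ℝ) else 0)
    let den : ℝ := ∑ s ∈ Finset.range (n + 1),
      ∑ S ∈ Finset.powersetCard s (Finset.univ : Finset (Fin n)),
        (p s / (n.choose s : ℝ)) * (if 0 < (S ∩ Z).card then 1 else 0)
    0 < den → num / den ≤ m2 / m1 :=
  stmt19_general n Z p hp hm1
end
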